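/- arXiv:1312.5947 — 8 statements merged into one kernel-verified Lean document; each statement's English description precedes it below -/
import Mathlib

section
/- For every α > 0, every θ ∈ (0, π/2), and every smooth compactly supported function ψ : ℝ² → ℝ, one has ∫_{ℝ²} |∇ψ(u,v)|² du dv − α ∫_ℝ |ψ(|s| cos θ, s sin θ)|² ds ≥ −(α²/cos²θ) ∫_{ℝ²} |ψ|² du dv. -/
open Real MeasureTheory Set

lemma ftc_bound (h : ℝ → ℝ) (hd : Differentiable ℝ h) (hd' : Continuous (deriv h))
    (hcs : HasCompactSupport h) (v₀ : ℝ) :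
    (h v₀) ^ 2 ≤ ∫ v : ℝ, |h v * deriv h v| := by
  set q' : ℝ → ℝ := fun v => 2 * h v * deriv h v with hq'def
  have hq'cont : Continuous q' := (continuous_const.mul hd.continuous).mul hd'
  have hq'cs : HasCompactSupport q' := by
    apply HasCompactSupport.intro hcs
    intro x hx
    simp [hq'def, image_eq_zero_of_notMem_tsupport hx]
  have hq'int : Integrable q' := hq'cont.integrable_of_hasCompactSupport hq'cs
  have habsint : Integrable (fun v => |q' v|) := hq'int.abs
  obtain ⟨r, hr⟩ := hcs.isBounded.subset_closedBall 0
  set R : ℝ := max r 0 + 1 with hR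
  have hR0 : 0 < R := by positivity
  have hsupp : ∀ x : ℝ, R ≤ |x| → h x = 0 := by
    intro x hx
    apply image_eq_zero_of_notMem_tsupport
    intro hmem
    have := hr hmem
    rw [Metric.mem_closedBall, Real.dist_eq, sub_zero] at this
    have : |x| ≤ max r 0 := this.trans (le_max_left _ _)
    linarith
  set a : ℝ := min v₀ 0 - R with ha
  set b : ℝ := max v₀ 0 + R with hb
  have hav : a ≤ v₀ := by have := min_le_left v₀ 0; simp only [ha]; linarith
  have hvb : v₀ ≤ b := by have := le_max_left v₀ 0; simp only [hb]; linarith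
  have hha : h a = 0 := by
    apply hsupp
    have h1 : a ≤ -R := by have := min_le_right v₀ 0; simp only [ha]; linarith
    rw [abs_of_nonpos (by linarith)]; linarith
  have hhb : h b = 0 := by
    apply hsupp
    have h1 : R ≤ b := by have := le_max_right v₀ 0; simp only [hb]; linarith
    rw [abs_of_nonneg (by linarith)]; linarith
  have hderiv : ∀ x : ℝ, HasDerivAt (fun v => (h v) ^ 2) (q' x) x := by
    intro x
    have := ((hd x).hasDerivAt).fun_pow 2
    simpa [hq'def, mul_comm, mul_assoc, mul_left_comm] using this
  have hint1 : ∫ x in a..v₀, q' x = h v₀ ^ 2 - h a ^ 2 :=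
    intervalIntegral.integral_eq_sub_of_hasDerivAt (fun x _ => hderiv x)
      (hq'cont.intervalIntegrable a v₀)
  have hint2 : ∫ x in v₀..b, q' x = h b ^ 2 - h v₀ ^ 2 :=
    intervalIntegral.integral_eq_sub_of_hasDerivAt (fun x _ => hderiv x)
      (hq'cont.intervalIntegrable v₀ b)
  rw [hha] at hint1; rw [hhb] at hint2
  have hm1 : ∫ x in a..v₀, q' x ≤ ∫ x in a..v₀, |q' x| :=
    intervalIntegral.integral_mono_on hav (hq'cont.intervalIntegrable a v₀)
      (hq'cont.abs.intervalIntegrable a v₀) (fun x _ => le_abs_self _)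
  have hm2 : ∫ x in v₀..b, (-q' x) ≤ ∫ x in v₀..b, |q' x| :=
    intervalIntegral.integral_mono_on hvb ((hq'cont.neg).intervalIntegrable v₀ b)
      (hq'cont.abs.intervalIntegrable v₀ b) (fun x _ => neg_le_abs _)
  rw [intervalIntegral.integral_neg] at hm2
  have hadd : (∫ x in a..v₀, |q' x|) + ∫ x in v₀..b, |q' x| = ∫ x in a..b, |q' x| :=
    intervalIntegral.integral_add_adjacent_intervals
      (hq'cont.abs.intervalIntegrable a v₀) (hq'cont.abs.intervalIntegrable v₀ b)
  have hab : ∫ x in a..b, |q' x| ≤ ∫ x : ℝ, |q' x| := by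
    rw [intervalIntegral.integral_of_le (hav.trans hvb)]
    exact setIntegral_le_integral habsint (Filter.Eventually.of_forall fun x => abs_nonneg _)
  have habs2 : ∫ x : ℝ, |q' x| = 2 * ∫ v : ℝ, |h v * deriv h v| := by
    rw [← integral_const_mul]
    congr 1; ext x
    simp [hq'def, abs_mul, mul_assoc]
  nlinarith [hint1, hint2, hm1, hm2, hadd, hab, habs2]

lemma D2_eq (ψ : ℝ × ℝ → ℝ) (hψ : ContDiff ℝ (⊤ : ℕ∞) ψ) (p : ℝ × ℝ) :
    deriv (fun v => ψ (p.1, v)) p.2 = fderiv ℝ ψ p ((0 : ℝ), (1 : ℝ)) := by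
  have h1 : HasDerivAt (fun v : ℝ => ((p.1, v) : ℝ × ℝ)) ((0 : ℝ), (1 : ℝ)) p.2 :=
    (hasDerivAt_const _ _).prodMk (hasDerivAt_id _)
  have h2 : HasFDerivAt ψ (fderiv ℝ ψ p) p := (hψ.differentiable (by simp) p).hasFDerivAt
  have h3 : HasDerivAt (fun v => ψ (p.1, v)) (fderiv ℝ ψ p ((0:ℝ),(1:ℝ))) p.2 := by
    exact h2.comp_hasDerivAt p.2 h1
  exact h3.deriv

lemma D1_eq (ψ : ℝ × ℝ → ℝ) (hψ : ContDiff ℝ (⊤ : ℕ∞) ψ) (p : ℝ × ℝ) :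
    deriv (fun u => ψ (u, p.2)) p.1 = fderiv ℝ ψ p ((1 : ℝ), (0 : ℝ)) := by
  have h1 : HasDerivAt (fun u : ℝ => ((u, p.2) : ℝ × ℝ)) ((1 : ℝ), (0 : ℝ)) p.1 :=
    (hasDerivAt_id _).prodMk (hasDerivAt_const _ _)
  have h2 : HasFDerivAt ψ (fderiv ℝ ψ p) p := (hψ.differentiable (by simp) p).hasFDerivAt
  have h3 : HasDerivAt (fun u => ψ (u, p.2)) (fderiv ℝ ψ p ((1:ℝ),(0:ℝ))) p.1 := by
    exact h2.comp_hasDerivAt p.1 h1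
  exact h3.deriv

lemma fd_cont (ψ : ℝ × ℝ → ℝ) (hψ : ContDiff ℝ (⊤ : ℕ∞) ψ) (w : ℝ × ℝ) :
    Continuous (fun p => fderiv ℝ ψ p w) :=
  (hψ.continuous_fderiv (by simp)).clm_apply continuous_const

lemma fd_cs (ψ : ℝ × ℝ → ℝ) (hc : HasCompactSupport ψ) (w : ℝ × ℝ) :
    HasCompactSupport (fun p => fderiv ℝ ψ p w) := by
  apply HasCompactSupport.intro (hc.fderiv ℝ)
  intro x hx
  simp [image_eq_zero_of_notMem_tsupport hx]

set_option maxHeartbeats  1000000 in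
theorem stmt_0 (α θ : ℝ) (hα : 0 < α) (hθ : θ ∈ Set.Ioo 0 (Real.pi / 2))
    (ψ : ℝ × ℝ → ℝ) (hψ : ContDiff ℝ (⊤ : ℕ∞) ψ) (hc : HasCompactSupport ψ) :
    (∫ p : ℝ × ℝ,
        ((deriv (fun u => ψ (u, p.2)) p.1) ^ 2 + (deriv (fun v => ψ (p.1, v)) p.2) ^ 2))
      - α * ∫ s : ℝ, (ψ (|s| * Real.cos θ, s * Real.sin θ)) ^ 2
    ≥ -(α ^ 2 / Real.cos θ ^ 2) * ∫ p : ℝ × ℝ, (ψ p) ^ 2 := by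
  obtain ⟨hθ1, hθ2⟩ := hθ
  have hc0 : 0 < Real.cos θ := Real.cos_pos_of_mem_Ioo ⟨by linarith [Real.pi_pos], hθ2⟩
  have hs0 : 0 < Real.sin θ := Real.sin_pos_of_pos_of_lt_pi hθ1 (by linarith [Real.pi_pos])
  set c : ℝ := Real.cos θ
  set st : ℝ := Real.sin θ
  set D1 : ℝ × ℝ → ℝ := fun p => fderiv ℝ ψ p ((1 : ℝ), (0 : ℝ)) with hD1def
  set D2 : ℝ × ℝ → ℝ := fun p => fderiv ℝ ψ p ((0 : ℝ), (1 : ℝ)) with hD2def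
  have hD1c : Continuous D1 := fd_cont ψ hψ _
  have hD2c : Continuous D2 := fd_cont ψ hψ _
  have hD1cs : HasCompactSupport D1 := fd_cs ψ hc _
  have hD2cs : HasCompactSupport D2 := fd_cs ψ hc _
  -- integrabilities
  have intψ2 : Integrable (fun p : ℝ × ℝ => ψ p ^ 2) := by
    apply ((hψ.continuous).pow 2).integrable_of_hasCompactSupport
    apply HasCompactSupport.intro hc
    intro x hx; simp [image_eq_zero_of_notMem_tsupport hx]
  have intD1sq : Integrable (fun p : ℝ × ℝ => D1 p ^ 2) := by
    apply (hD1c.pow 2).integrable_of_hasCompactSupport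
    apply HasCompactSupport.intro hD1cs
    intro x hx; simp [image_eq_zero_of_notMem_tsupport (f := D1) hx]
  have intD2sq : Integrable (fun p : ℝ × ℝ => D2 p ^ 2) := by
    apply (hD2c.pow 2).integrable_of_hasCompactSupport
    apply HasCompactSupport.intro hD2cs
    intro x hx; simp [image_eq_zero_of_notMem_tsupport (f := D2) hx]
  set G : ℝ × ℝ → ℝ := fun p => |ψ p * D2 p| with hGdef
  have hGc : Continuous G := (hψ.continuous.mul hD2c).abs
  have intG : Integrable G := by
    apply hGc.integrable_of_hasCompactSupport
    apply HasCompactSupport.intro hc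
    intro x hx; simp [hGdef, image_eq_zero_of_notMem_tsupport hx]
  -- F and Fubini
  set F : ℝ → ℝ := fun u => ∫ v : ℝ, G (u, v) with hFdef
  have intG' : Integrable G (volume.prod volume) := by rwa [← Measure.volume_eq_prod]
  have hFint : Integrable F := by
    have := intG'.integral_norm_prod_left
    apply this.congr
    filter_upwards with u
    simp only [hFdef, Real.norm_eq_abs, hGdef, abs_abs]
  have hFnonneg : ∀ u, 0 ≤ F u := fun u => integral_nonneg fun v => abs_nonneg _
  have hFub : ∫ p : ℝ × ℝ, G p = ∫ u : ℝ, F u := by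
    rw [Measure.volume_eq_prod]; exact integral_prod G intG'
  -- key pointwise trace bound
  have key : ∀ u v₀ : ℝ, (ψ (u, v₀)) ^ 2 ≤ F u := by
    intro u v₀
    have hdiff : Differentiable ℝ (fun v : ℝ => ψ (u, v)) :=
      (hψ.differentiable (by simp)).comp ((differentiable_const u).prodMk differentiable_id)
    have hder : deriv (fun v : ℝ => ψ (u, v)) = fun v => D2 (u, v) :=
      funext fun v => D2_eq ψ hψ (u, v)
    have hdc : Continuous (deriv (fun v : ℝ => ψ (u, v))) := by
      rw [hder]; exact hD2c.comp (continuous_const.prodMk continuous_id)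
    have hhcs : HasCompactSupport (fun v : ℝ => ψ (u, v)) := by
      apply HasCompactSupport.intro (hc.image continuous_snd)
      intro v hv
      by_contra hne
      exact hv ⟨(u, v), subset_tsupport ψ hne, rfl⟩
    have := ftc_bound (fun v => ψ (u, v)) hdiff hdc hhcs v₀
    rw [hder] at this
    exact this
  -- trace integral
  set g : ℝ → ℝ := fun s => ψ (|s| * c, s * st) ^ 2 with hgdef
  have hgc : Continuous g :=
    (hψ.continuous.comp ((continuous_abs.mul continuous_const).prodMk
      (continuous_id.mul continuous_const))).pow 2
  have hgcs : HasCompactSupport g := by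
    obtain ⟨r, hr⟩ := hc.isBounded.subset_closedBall 0
    apply HasCompactSupport.intro (isCompact_Icc (a := -((max r 0) / st)) (b := (max r 0) / st))
    intro s hs
    simp only [mem_Icc, not_and_or, not_le] at hs
    have habs : (max r 0) / st < |s| := by
      rcases hs with h | h
      · rw [abs_of_neg (by nlinarith [div_nonneg (le_max_right r 0) hs0.le])]; linarith
      · exact lt_of_lt_of_le h (le_abs_self s)
    have hnot : (|s| * c, s * st) ∉ tsupport ψ := by
      intro hmem
      have := hr hmem
      rw [Metric.mem_closedBall, Prod.dist_eq] at this
      have h2 : dist (s * st) (0 : ℝ) ≤ r := le_trans (le_max_right _ _) this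
      rw [Real.dist_eq, sub_zero, abs_mul, abs_of_pos hs0] at h2
      have : |s| ≤ r / st := (le_div_iff₀ hs0).mpr h2
      have h3 : r / st ≤ max r 0 / st := by gcongr; exact le_max_left r 0
      have : |s| ≤ max r 0 / st := this.trans h3
      linarith
    simp [hgdef, image_eq_zero_of_notMem_tsupport hnot]
  have intg : Integrable g := hgc.integrable_of_hasCompactSupport hgcs
  have hFc : Integrable (fun s => F (c * s)) :=
    (integrable_comp_mul_left_iff F hc0.ne').mpr hFint
  have hFcn : Integrable (fun s => F (-c * s)) :=
    (integrable_comp_mul_left_iff F (by simpa using hc0.ne')).mpr hFint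
  have hIoi : ∫ s in Ioi (0:ℝ), g s ≤ ∫ s in Ioi (0:ℝ), F (c * s) := by
    apply setIntegral_mono_on intg.integrableOn hFc.integrableOn measurableSet_Ioi
    intro s hs
    have : |s| = s := abs_of_pos hs
    calc g s = ψ (c * s, s * st) ^ 2 := by rw [hgdef]; simp only; rw [this, mul_comm]
    _ ≤ F (c * s) := key _ _
  have hIic : ∫ s in Iic (0:ℝ), g s ≤ ∫ s in Iic (0:ℝ), F (-c * s) := by
    apply setIntegral_mono_on intg.integrableOn hFcn.integrableOn measurableSet_Iic
    intro s hs
    have habs : |s| = -s := abs_of_nonpos hs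
    calc g s = ψ (-c * s, s * st) ^ 2 := by rw [hgdef]; simp only; rw [habs]; ring_nf
    _ ≤ F (-c * s) := key _ _
  have hIoi2 : ∫ s in Ioi (0:ℝ), F (c * s) = c⁻¹ * ∫ x in Ioi (0:ℝ), F x := by
    have := integral_comp_mul_left_Ioi F 0 hc0
    rw [mul_zero] at this
    rw [this, smul_eq_mul]
  have hIic2 : ∫ s in Iic (0:ℝ), F (-c * s) = c⁻¹ * ∫ x in Ioi (0:ℝ), F x := by
    have h2 := integral_comp_neg_Iic (0:ℝ) (fun t => F (c * t))
    rw [neg_zero] at h2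
    have h1 : ∫ s in Iic (0:ℝ), F (-c * s) = ∫ s in Iic (0:ℝ), (fun t => F (c * t)) (-s) := by
      congr 1; ext s; simp only; ring_nf
    rw [h1, h2, hIoi2]
  have hIF : ∫ x in Ioi (0:ℝ), F x ≤ ∫ x : ℝ, F x :=
    setIntegral_le_integral hFint (Filter.Eventually.of_forall hFnonneg)
  have htrace : ∫ s : ℝ, g s ≤ 2 * c⁻¹ * ∫ x : ℝ, F x := by
    rw [← intervalIntegral.integral_Iic_add_Ioi intg.integrableOn intg.integrableOn]
    have hcinv : (0:ℝ) ≤ c⁻¹ := (inv_pos.mpr hc0).le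
    nlinarith [hIic.trans_eq hIic2, hIoi.trans_eq hIoi2]
  -- AM-GM
  set ε : ℝ := c / α with hεdef
  have hε : 0 < ε := div_pos hc0 hα
  set A : ℝ := ∫ p : ℝ × ℝ, D2 p ^ 2 with hAdef
  set B : ℝ := ∫ p : ℝ × ℝ, ψ p ^ 2 with hBdef
  set T : ℝ := ∫ s : ℝ, g s with hTdef
  set I : ℝ := ∫ u : ℝ, F u with hIdef
  have hAM : ∫ p : ℝ × ℝ, G p
      ≤ ε / 2 * A + 1 / (2 * ε) * B := by
    have hpt : ∀ p : ℝ × ℝ, G p ≤ ε / 2 * D2 p ^ 2 + 1 / (2 * ε) * ψ p ^ 2 := by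
      intro p
      have h1 : G p = |ψ p| * |D2 p| := abs_mul _ _
      rw [h1]
      have h2ε : (0:ℝ) < 2 * ε := by linarith
      rw [← mul_le_mul_iff_right₀ h2ε]
      have e1 : 2 * ε * (ε / 2 * D2 p ^ 2 + 1 / (2 * ε) * ψ p ^ 2)
          = ε ^ 2 * D2 p ^ 2 + ψ p ^ 2 := by field_simp
      rw [e1]
      nlinarith [sq_nonneg (ε * |D2 p| - |ψ p|), sq_abs (D2 p), sq_abs (ψ p)]
    calc ∫ p : ℝ × ℝ, G p
        ≤ ∫ p : ℝ × ℝ, (ε / 2 * D2 p ^ 2 + 1 / (2 * ε) * ψ p ^ 2) :=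
          integral_mono intG ((intD2sq.const_mul _).add (intψ2.const_mul _)) hpt
      _ = ε / 2 * A + 1 / (2 * ε) * B := by
          rw [integral_add (intD2sq.const_mul _) (intψ2.const_mul _),
            integral_const_mul, integral_const_mul, hAdef, hBdef]
  -- assemble
  simp_rw [D1_eq ψ hψ, D2_eq ψ hψ]
  rw [integral_add intD1sq intD2sq]
  have hA1 : 0 ≤ ∫ p : ℝ × ℝ, D1 p ^ 2 := integral_nonneg fun p => sq_nonneg _
  have hGI : ∫ p : ℝ × ℝ, G p = I := hFub
  rw [hGI] at hAM
  have hfinal : α * T ≤ A + α ^ 2 / c ^ 2 * B := by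
    have h2 : α * T ≤ α * (2 * c⁻¹ * I) := mul_le_mul_of_nonneg_left htrace hα.le
    have h3 : α * (2 * c⁻¹ * I) ≤ α * (2 * c⁻¹ * (ε / 2 * A + 1 / (2 * ε) * B)) := by
      apply mul_le_mul_of_nonneg_left _ hα.le
      apply mul_le_mul_of_nonneg_left hAM
      positivity
    have h4 : α * (2 * c⁻¹ * (ε / 2 * A + 1 / (2 * ε) * B)) = A + α ^ 2 / c ^ 2 * B := by
      rw [hεdef]; field_simp
    linarith
  linarith
end

section
/- For every h > 0 and every ψ ∈ C_c^∞(ℝ²), one has 𝔔_h(ψ) ≥ ∫_{ℝ²} (h²|∂_xψ(x,y)|² + μ̃₁(x)|ψ(x,y)|²) dx dy, where μ̃₁(x) = μ₁(x) for x ≥ 0 and μ̃₁(x) = 0 for x < 0; in particular 𝔔_h(ψ) ≥ −∫_{ℝ²} |ψ|² dx dy. -/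
open Real MeasureTheory Set

private lemma tanh_hasDerivAt' (x : ℝ) : HasDerivAt Real.tanh (1 - Real.tanh x ^ 2) x := by
  have hc := Real.cosh_pos x
  have h1 : HasDerivAt (fun y => Real.sinh y / Real.cosh y)
      ((Real.cosh x * Real.cosh x - Real.sinh x * Real.sinh x) / Real.cosh x ^ 2) x :=
    (Real.hasDerivAt_sinh x).div (Real.hasDerivAt_cosh x) hc.ne'
  have h2 : (Real.cosh x * Real.cosh x - Real.sinh x * Real.sinh x) / Real.cosh x ^ 2
      = 1 - Real.tanh x ^ 2 := by
    rw [Real.tanh_eq_sinh_div_cosh, div_pow]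
    have h3 := Real.cosh_sq_sub_sinh_sq x
    field_simp
  rw [← h2]
  exact h1.congr_of_eventuallyEq (by filter_upwards with y using (Real.tanh_eq_sinh_div_cosh y))

private lemma key_interval' (f t : ℝ → ℝ) (c d lam : ℝ)
    (hfd : Differentiable ℝ f) (hfc : Continuous (deriv f))
    (ht : ∀ y ∈ Set.uIcc c d, HasDerivAt t (lam ^ 2 - (t y) ^ 2) y) :
    ∫ y in c..d, ((deriv f y) ^ 2 + lam ^ 2 * (f y) ^ 2) =
      (∫ y in c..d, (deriv f y - t y * f y) ^ 2) + (t d * f d ^ 2 - t c * f c ^ 2) := by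
  have htc : ContinuousOn t (Set.uIcc c d) := fun y hy => (ht y hy).continuousAt.continuousWithinAt
  have hG : ∀ y ∈ Set.uIcc c d, HasDerivAt (fun y => t y * f y ^ 2)
      ((lam ^ 2 - t y ^ 2) * f y ^ 2 + t y * (2 * f y ^ 1 * deriv f y)) y := by
    intro y hy
    exact (ht y hy).mul ((hfd y).hasDerivAt.pow 2)
  have hcont2 : ContinuousOn
      (fun y => (lam ^ 2 - t y ^ 2) * f y ^ 2 + t y * (2 * f y ^ 1 * deriv f y))
      (Set.uIcc c d) := by
    apply ContinuousOn.add
    · exact (continuousOn_const.sub (htc.pow 2)).mul ((hfd.continuous.pow 2).continuousOn)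
    · exact htc.mul (((continuous_const.mul (hfd.continuous.pow 1)).mul hfc).continuousOn)
  have FTC : ∫ y in c..d, ((lam ^ 2 - t y ^ 2) * f y ^ 2 + t y * (2 * f y ^ 1 * deriv f y))
      = t d * f d ^ 2 - t c * f c ^ 2 :=
    intervalIntegral.integral_eq_sub_of_hasDerivAt hG hcont2.intervalIntegrable
  have hcont1 : ContinuousOn (fun y => (deriv f y - t y * f y) ^ 2) (Set.uIcc c d) :=
    ((hfc.continuousOn.sub (htc.mul hfd.continuous.continuousOn)).pow 2)
  have split : ∫ y in c..d, ((deriv f y) ^ 2 + lam ^ 2 * (f y) ^ 2)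
      = (∫ y in c..d, (deriv f y - t y * f y) ^ 2)
        + ∫ y in c..d, ((lam ^ 2 - t y ^ 2) * f y ^ 2 + t y * (2 * f y ^ 1 * deriv f y)) := by
    rw [← intervalIntegral.integral_add hcont1.intervalIntegrable hcont2.intervalIntegrable]
    apply intervalIntegral.integral_congr
    intro y hy
    ring
  rw [split, FTC]

private lemma onedim' (a lam : ℝ) (ha : 0 ≤ a)
    (hkey : lam * (1 + Real.tanh (lam * a)) = 1)
    (f : ℝ → ℝ) (hfd : Differentiable ℝ f) (hfc : Continuous (deriv f))
    (hsupp : HasCompactSupport f) :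
    f a ^ 2 + f (-a) ^ 2 ≤ (∫ y, (deriv f y) ^ 2) + lam ^ 2 * ∫ y, (f y) ^ 2 := by
  obtain ⟨M, hM⟩ := hsupp.isBounded.subset_closedBall 0
  set R : ℝ := max M a + 1 with hR
  have haR : a ≤ R := le_trans (le_max_right M a) (by linarith [le_refl (max M a)])
  have hRR : a < R := lt_of_le_of_lt (le_max_right M a) (by linarith)
  have hsub : tsupport f ⊆ Set.Ioc (-R) R := by
    intro y hy
    have := hM hy
    rw [Metric.mem_closedBall, Real.dist_eq, sub_zero] at this
    have h1 : M ≤ max M a := le_max_left M a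
    constructor
    · have := abs_le.mp this; linarith
    · have := abs_le.mp this; linarith
  have hf0 : ∀ y, y ∉ Set.Ioc (-R) R → f y = 0 := fun y hy =>
    image_eq_zero_of_notMem_tsupport (fun hmem => hy (hsub hmem))
  have hf0' : ∀ y, y ∉ Set.Ioc (-R) R → deriv f y = 0 := by
    intro y hy
    by_contra hne
    exact hy (hsub (support_deriv_subset (Function.mem_support.mpr hne)))
  -- integrability
  have hcs1 : HasCompactSupport (fun y => (deriv f y) ^ 2) :=
    hsupp.deriv.comp_left (g := fun z : ℝ => z ^ 2) (by norm_num)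
  have hcs2 : HasCompactSupport (fun y => (f y) ^ 2) :=
    hsupp.comp_left (g := fun z : ℝ => z ^ 2) (by norm_num)
  have hint1 : Integrable (fun y => (deriv f y) ^ 2) := (hfc.pow 2).integrable_of_hasCompactSupport hcs1
  have hint2 : Integrable (fun y => (f y) ^ 2) :=
    (hfd.continuous.pow 2).integrable_of_hasCompactSupport hcs2
  have hcomb : (∫ y, (deriv f y) ^ 2) + lam ^ 2 * ∫ y, (f y) ^ 2
      = ∫ y, ((deriv f y) ^ 2 + lam ^ 2 * (f y) ^ 2) := by
    rw [integral_add hint1 (hint2.const_mul _), MeasureTheory.integral_const_mul]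
  have hgc : Continuous (fun y => (deriv f y) ^ 2 + lam ^ 2 * (f y) ^ 2) :=
    (hfc.pow 2).add (continuous_const.mul (hfd.continuous.pow 2))
  have hwhole : (∫ y in (-R)..R, ((deriv f y) ^ 2 + lam ^ 2 * (f y) ^ 2))
      = ∫ y, ((deriv f y) ^ 2 + lam ^ 2 * (f y) ^ 2) := by
    apply intervalIntegral.integral_eq_integral_of_support_subset
    intro y hy
    simp only [Function.mem_support] at hy
    by_contra hmem
    exact hy (by rw [hf0' y hmem, hf0 y hmem]; ring)
  have hii : ∀ c d : ℝ, IntervalIntegrable (fun y => (deriv f y) ^ 2 + lam ^ 2 * (f y) ^ 2)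
      volume c d := fun c d => hgc.intervalIntegrable c d
  have hsplit : (∫ y in (-R)..R, ((deriv f y) ^ 2 + lam ^ 2 * (f y) ^ 2))
      = (∫ y in (-R)..(-a), ((deriv f y) ^ 2 + lam ^ 2 * (f y) ^ 2))
        + (∫ y in (-a)..a, ((deriv f y) ^ 2 + lam ^ 2 * (f y) ^ 2))
        + (∫ y in a..R, ((deriv f y) ^ 2 + lam ^ 2 * (f y) ^ 2)) := by
    rw [intervalIntegral.integral_add_adjacent_intervals (hii (-R) (-a)) (hii (-a) a),
      intervalIntegral.integral_add_adjacent_intervals (hii (-R) a) (hii a R)]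
  -- three applications of key_interval'
  have K1 := key_interval' f (fun _ => lam) (-R) (-a) lam hfd hfc
    (fun y _ => by simpa [sub_self] using hasDerivAt_const y lam)
  have K3 := key_interval' f (fun _ => -lam) a R lam hfd hfc
    (fun y _ => by
      have := hasDerivAt_const y (-lam)
      convert this using 1
      exacts [rfl, rfl, by ring])
  have K2 := key_interval' f (fun y => lam * Real.tanh (lam * y)) (-a) a lam hfd hfc
    (fun y _ => by
      have h1 : HasDerivAt (fun y : ℝ => lam * y) lam y := by
        simpa using (hasDerivAt_id y).const_mul lam
      have h2 : HasDerivAt (fun y : ℝ => Real.tanh (lam * y))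
          ((1 - Real.tanh (lam * y) ^ 2) * lam) y := (tanh_hasDerivAt' (lam * y)).comp y h1
      have h3 := h2.const_mul lam
      convert h3 using 1
      exacts [rfl, rfl, by ring])
  -- nonnegativity of the squares
  have hn1 : 0 ≤ ∫ y in (-R)..(-a), (deriv f y - lam * f y) ^ 2 :=
    intervalIntegral.integral_nonneg (by linarith) (fun y _ => sq_nonneg _)
  have hn2 : 0 ≤ ∫ y in (-a)..a, (deriv f y - lam * Real.tanh (lam * y) * f y) ^ 2 :=
    intervalIntegral.integral_nonneg (by linarith) (fun y _ => sq_nonneg _)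
  have hn3 : 0 ≤ ∫ y in a..R, (deriv f y - (-lam) * f y) ^ 2 :=
    intervalIntegral.integral_nonneg (by linarith) (fun y _ => sq_nonneg _)
  have hMR : ∀ y : ℝ, M < |y| → f y = 0 := by
    intro y hy
    apply image_eq_zero_of_notMem_tsupport
    intro hmem
    have := hM hmem
    rw [Metric.mem_closedBall, Real.dist_eq, sub_zero] at this
    linarith
  have hRpos : 0 < R := by
    have := le_max_right M a
    simp only [hR]
    linarith
  have hMltR : M < R := by
    have := le_max_left M a
    simp only [hR]
    linarith
  have hfR : f R = 0 := hMR R (by rw [abs_of_pos hRpos]; exact hMltR)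
  have hfmR : f (-R) = 0 := hMR (-R) (by rw [abs_neg, abs_of_pos hRpos]; exact hMltR)
  have hbd : lam * f (-a) ^ 2 + (lam * Real.tanh (lam * a) * f a ^ 2
      + lam * Real.tanh (lam * a) * f (-a) ^ 2) + lam * f a ^ 2 = f a ^ 2 + f (-a) ^ 2 := by
    linear_combination (f a ^ 2 + f (-a) ^ 2) * hkey
  rw [← hwhole, hsplit] at hcomb
  rw [hcomb, K1, K2, K3]
  simp only [hfR, hfmR, mul_neg, Real.tanh_neg]
  nlinarith [hn1, hn2, hn3, hbd]

private lemma keyval' (lam x : ℝ)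
    (heq : (2 * lam - 1) * Real.exp (2 * lam * x) = 1) :
    lam * (1 + Real.tanh (lam * x)) = 1 := by
  have hc := Real.cosh_pos (lam * x)
  have he : Real.exp (2 * lam * x) = Real.exp (lam * x) * Real.exp (lam * x) := by
    rw [← Real.exp_add]; ring_nf
  have hee : Real.exp (lam * x) * Real.exp (-(lam * x)) = 1 := by
    rw [← Real.exp_add]; simp
  rw [Real.tanh_eq_sinh_div_cosh, Real.sinh_eq, Real.cosh_eq]
  rw [Real.cosh_eq] at hc
  rw [he] at heq
  field_simp
  nlinarith [heq, hee, Real.exp_pos (lam * x), Real.exp_pos (-(lam * x))]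

private lemma lam_anti' (lam1 : ℝ → ℝ)
    (hlam1 : ∀ x : ℝ, 0 ≤ x → lam1 x ∈ Set.Ioc (1/2 : ℝ) 1 ∧
      (2 * lam1 x - 1) * Real.exp (2 * lam1 x * x) = 1) :
    ∀ x y : ℝ, 0 ≤ x → x ≤ y → lam1 y ≤ lam1 x := by
  intro x y hx hxy
  by_contra hlt
  push_neg at hlt
  obtain ⟨⟨hx1, hx2⟩, hxe⟩ := hlam1 x hx
  obtain ⟨⟨hy1, hy2⟩, hye⟩ := hlam1 y (le_trans hx hxy)
  have h1 : 2 * lam1 x * x ≤ 2 * lam1 y * y := by nlinarith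
  have h2 : Real.exp (2 * lam1 x * x) ≤ Real.exp (2 * lam1 y * y) := Real.exp_le_exp.mpr h1
  have h3 : (0:ℝ) < 2 * lam1 x - 1 := by linarith
  have h4 : (2 * lam1 x - 1) * Real.exp (2 * lam1 x * x)
      < (2 * lam1 y - 1) * Real.exp (2 * lam1 y * y) := by
    have := Real.exp_pos (2 * lam1 x * x)
    nlinarith
  rw [hxe, hye] at h4
  exact lt_irrefl 1 h4

private lemma slice_props' (ψ : ℝ × ℝ → ℝ) (hψ : ContDiff ℝ (⊤ : ℕ∞) ψ) (hc : HasCompactSupport ψ)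
    (x : ℝ) :
    Differentiable ℝ (fun y => ψ (x, y)) ∧ Continuous (deriv (fun y => ψ (x, y))) ∧
      HasCompactSupport (fun y => ψ (x, y)) := by
  have hsl : ContDiff ℝ (⊤ : ℕ∞) (fun y => ψ (x, y)) := hψ.comp (contDiff_const.prodMk contDiff_id)
  have h1 : ContDiff ℝ ((⊤ : ℕ∞) : WithTop ℕ∞) (fun y => ψ (x, y)) := hsl.of_le (by simp)
  refine ⟨hsl.differentiable (by simp), (contDiff_infty_iff_deriv.mp h1).2.continuous, ?_⟩
  obtain ⟨M, hM⟩ := hc.isBounded.subset_closedBall 0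
  apply HasCompactSupport.intro (isCompact_closedBall (0:ℝ) M)
  intro y hy
  rw [Metric.mem_closedBall, Real.dist_eq, sub_zero, not_le] at hy
  apply image_eq_zero_of_notMem_tsupport
  intro hmem
  have h2 := hM hmem
  rw [Metric.mem_closedBall, dist_zero_right, Prod.norm_def] at h2
  simp only [Real.norm_eq_abs] at h2
  have := le_max_right |x| |y|
  linarith [le_trans this h2]

theorem stmt_1 (h : ℝ) (hh : 0 < h)
    (lam1 : ℝ → ℝ)
    (hlam1 : ∀ x : ℝ, 0 ≤ x → lam1 x ∈ Set.Ioc (1/2 : ℝ) 1 ∧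
      (2 * lam1 x - 1) * Real.exp (2 * lam1 x * x) = 1)
    (ψ : ℝ × ℝ → ℝ) (hψ : ContDiff ℝ (⊤ : ℕ∞) ψ) (hc : HasCompactSupport ψ) :
    ((∫ p : ℝ × ℝ, (h ^ 2 * (deriv (fun x => ψ (x, p.2)) p.1) ^ 2
        + (deriv (fun y => ψ (p.1, y)) p.2) ^ 2))
      - ∫ s : ℝ, (ψ (|s|, s)) ^ 2
    ≥ ∫ p : ℝ × ℝ, (h ^ 2 * (deriv (fun x => ψ (x, p.2)) p.1) ^ 2
        + (if 0 ≤ p.1 then -(lam1 p.1) ^ 2 else 0) * (ψ p) ^ 2)) ∧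
    ((∫ p : ℝ × ℝ, (h ^ 2 * (deriv (fun x => ψ (x, p.2)) p.1) ^ 2
        + (deriv (fun y => ψ (p.1, y)) p.2) ^ 2))
      - ∫ s : ℝ, (ψ (|s|, s)) ^ 2
    ≥ - ∫ p : ℝ × ℝ, (ψ p) ^ 2) := by
  classical
  have hdiff : Differentiable ℝ ψ := hψ.differentiable (by simp)
  -- derivative identification
  have hder2 : ∀ p : ℝ × ℝ, HasDerivAt (fun y => ψ (p.1, y)) (fderiv ℝ ψ p (0, 1)) p.2 := by
    intro p
    have h1 : HasDerivAt (fun y : ℝ => ((p.1 : ℝ), y)) ((0 : ℝ), (1 : ℝ)) p.2 :=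
      (hasDerivAt_const p.2 p.1).prodMk (hasDerivAt_id p.2)
    exact (hdiff p).hasFDerivAt.comp_hasDerivAt p.2 h1
  have hder1 : ∀ p : ℝ × ℝ, HasDerivAt (fun x => ψ (x, p.2)) (fderiv ℝ ψ p (1, 0)) p.1 := by
    intro p
    have h1 : HasDerivAt (fun x : ℝ => ((x : ℝ), (p.2 : ℝ))) ((1 : ℝ), (0 : ℝ)) p.1 :=
      (hasDerivAt_id p.1).prodMk (hasDerivAt_const p.1 p.2)
    exact (hdiff p).hasFDerivAt.comp_hasDerivAt p.1 h1
  -- continuity and integrability of the derivative squares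
  have hfc : Continuous (fun p : ℝ × ℝ => fderiv ℝ ψ p) := hψ.continuous_fderiv (by simp)
  have hsuppf : HasCompactSupport (fun p : ℝ × ℝ => fderiv ℝ ψ p) := hc.fderiv ℝ
  have hint_v : ∀ v : ℝ × ℝ, Integrable (fun p : ℝ × ℝ => (fderiv ℝ ψ p v) ^ 2) := by
    intro v
    have hcont : Continuous (fun p : ℝ × ℝ => fderiv ℝ ψ p v) := hfc.clm_apply continuous_const
    have hs1 : HasCompactSupport (fun p : ℝ × ℝ => fderiv ℝ ψ p v) :=
      hsuppf.comp_left (g := fun L : ℝ × ℝ →L[ℝ] ℝ => L v) rfl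
    exact (hcont.pow 2).integrable_of_hasCompactSupport
      (hs1.comp_left (g := fun z : ℝ => z ^ 2) (by norm_num) :)
  have int1 := hint_v (1, 0)
  have int2 := hint_v (0, 1)
  have intT : Integrable (fun p : ℝ × ℝ => h ^ 2 * (fderiv ℝ ψ p (1, 0)) ^ 2) :=
    int1.const_mul _
  have intψ2 : Integrable (fun p : ℝ × ℝ => (ψ p) ^ 2) :=
    (hψ.continuous.pow 2).integrable_of_hasCompactSupport
      (hc.comp_left (g := fun z : ℝ => z ^ 2) (by norm_num) :)
  -- the effective potential
  set μt : ℝ → ℝ := fun x => if 0 ≤ x then -(lam1 x) ^ 2 else 0 with hμt_def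
  have hμt_bd : ∀ x : ℝ, -1 ≤ μt x ∧ μt x ≤ 0 := by
    intro x
    simp only [hμt_def]
    by_cases hx : 0 ≤ x
    · obtain ⟨⟨h1, h2⟩, _⟩ := hlam1 x hx
      rw [if_pos hx]
      constructor <;> nlinarith
    · rw [if_neg hx]; norm_num
  have hμt_meas : Measurable μt := by
    set gm : ℝ → ℝ := fun x => if 0 ≤ x then lam1 x else 1 with hgm
    have hanti : Antitone gm := by
      intro x y hxy
      simp only [hgm]
      by_cases hx : 0 ≤ x
      · rw [if_pos hx, if_pos (le_trans hx hxy)]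
        exact lam_anti' lam1 hlam1 x y hx hxy
      · rw [if_neg hx]
        by_cases hy : 0 ≤ y
        · rw [if_pos hy]; exact (hlam1 y hy).1.2
        · rw [if_neg hy]
    have heq : μt = fun x => Set.indicator (Set.Ici (0:ℝ)) (fun x => -(gm x) ^ 2) x := by
      funext x
      by_cases hx : 0 ≤ x
      · simp only [hμt_def, hgm, Set.indicator_of_mem (Set.mem_Ici.mpr hx), if_pos hx]
      · simp only [hμt_def, hgm,
          Set.indicator_of_notMem (fun hmem => hx (Set.mem_Ici.mp hmem)), if_neg hx]
    rw [heq]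
    exact ((hanti.measurable.pow_const 2).neg).indicator measurableSet_Ici
  have intD : Integrable (fun p : ℝ × ℝ => μt p.1 * (ψ p) ^ 2) := by
    apply Integrable.mono intψ2
    · exact ((hμt_meas.comp measurable_fst).mul
        ((hψ.continuous.pow 2).measurable)).aestronglyMeasurable
    · filter_upwards with p
      rw [Real.norm_eq_abs, Real.norm_eq_abs, abs_mul]
      have h1 := (hμt_bd p.1).1
      have h2 := (hμt_bd p.1).2
      have h3 : |μt p.1| ≤ 1 := abs_le.mpr ⟨by linarith, by linarith⟩
      have h4 : |(ψ p) ^ 2| = (ψ p) ^ 2 := abs_of_nonneg (sq_nonneg _)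
      rw [h4]
      nlinarith [sq_nonneg (ψ p), abs_nonneg (μt p.1)]
  -- rewrite LHS integral
  have eL : (∫ p : ℝ × ℝ, (h ^ 2 * (deriv (fun x => ψ (x, p.2)) p.1) ^ 2
        + (deriv (fun y => ψ (p.1, y)) p.2) ^ 2))
      = (∫ p : ℝ × ℝ, h ^ 2 * (fderiv ℝ ψ p (1, 0)) ^ 2)
        + ∫ p : ℝ × ℝ, (fderiv ℝ ψ p (0, 1)) ^ 2 := by
    rw [← integral_add intT int2]
    apply integral_congr_ae
    filter_upwards with p
    rw [(hder1 p).deriv, (hder2 p).deriv]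
  have eR : (∫ p : ℝ × ℝ, (h ^ 2 * (deriv (fun x => ψ (x, p.2)) p.1) ^ 2
        + (if 0 ≤ p.1 then -(lam1 p.1) ^ 2 else 0) * (ψ p) ^ 2))
      = (∫ p : ℝ × ℝ, h ^ 2 * (fderiv ℝ ψ p (1, 0)) ^ 2)
        + ∫ p : ℝ × ℝ, μt p.1 * (ψ p) ^ 2 := by
    rw [← integral_add intT intD]
    apply integral_congr_ae
    filter_upwards with p
    rw [(hder1 p).deriv]
  -- Fubini for B and D
  have int2' : Integrable (fun p : ℝ × ℝ => (fderiv ℝ ψ p (0, 1)) ^ 2)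
      ((volume : Measure ℝ).prod volume) := by
    rwa [← Measure.volume_eq_prod]
  have intD' : Integrable (fun p : ℝ × ℝ => μt p.1 * (ψ p) ^ 2)
      ((volume : Measure ℝ).prod volume) := by
    rwa [← Measure.volume_eq_prod]
  have hB : (∫ p : ℝ × ℝ, (fderiv ℝ ψ p (0, 1)) ^ 2)
      = ∫ x : ℝ, ∫ y : ℝ, (fderiv ℝ ψ (x, y) (0, 1)) ^ 2 := by
    rw [Measure.volume_eq_prod]
    exact integral_prod _ int2'
  have hD : (∫ p : ℝ × ℝ, μt p.1 * (ψ p) ^ 2)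
      = ∫ x : ℝ, ∫ y : ℝ, μt x * (ψ (x, y)) ^ 2 := by
    rw [Measure.volume_eq_prod]
    exact integral_prod _ intD'
  have intB' : Integrable (fun x : ℝ => ∫ y : ℝ, (fderiv ℝ ψ (x, y) (0, 1)) ^ 2) :=
    int2'.integral_prod_left
  have intDm : Integrable (fun x : ℝ => ∫ y : ℝ, μt x * (ψ (x, y)) ^ 2) :=
    intD'.integral_prod_left
  -- the trace term
  obtain ⟨M, hM⟩ := hc.isBounded.subset_closedBall 0
  have htr0 : ∀ g : ℝ → ℝ × ℝ, Continuous g → (∀ s : ℝ, |s| ≤ ‖g s‖) →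
      Continuous (fun s => (ψ (g s)) ^ 2) ∧ HasCompactSupport (fun s => (ψ (g s)) ^ 2) := by
    intro g hg hbd
    refine ⟨((hψ.continuous.comp hg).pow 2), ?_⟩
    apply HasCompactSupport.intro (isCompact_closedBall (0:ℝ) M)
    intro s hs
    rw [Metric.mem_closedBall, Real.dist_eq, sub_zero, not_le] at hs
    have : ψ (g s) = 0 := by
      apply image_eq_zero_of_notMem_tsupport
      intro hmem
      have h2 := hM hmem
      rw [Metric.mem_closedBall, dist_zero_right] at h2
      linarith [hbd s]
    rw [this]; ring
  have hg1 : ∀ s : ℝ, |s| ≤ ‖((|s| : ℝ), s)‖ := by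
    intro s
    rw [Prod.norm_def]
    simp only [Real.norm_eq_abs]
    exact le_max_of_le_right (le_refl _)
  have ⟨hτc, hτs⟩ := htr0 (fun s => ((|s| : ℝ), s))
    ((continuous_abs).prodMk continuous_id) hg1
  have intτ : Integrable (fun s : ℝ => (ψ (|s|, s)) ^ 2) :=
    hτc.integrable_of_hasCompactSupport hτs
  have ⟨hτc1, hτs1⟩ := htr0 (fun s => ((s : ℝ), s)) (continuous_id.prodMk continuous_id)
    (fun s => by rw [Prod.norm_def]; simp only [Real.norm_eq_abs]; exact le_max_left _ _)
  have intτ1 : Integrable (fun s : ℝ => (ψ (s, s)) ^ 2) :=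
    hτc1.integrable_of_hasCompactSupport hτs1
  have ⟨hτc2, hτs2⟩ := htr0 (fun s => ((s : ℝ), -s)) (continuous_id.prodMk continuous_neg)
    (fun s => by rw [Prod.norm_def]; simp only [Real.norm_eq_abs]; exact le_max_left _ _)
  have intτ2 : Integrable (fun s : ℝ => (ψ (s, -s)) ^ 2) :=
    hτc2.integrable_of_hasCompactSupport hτs2
  have ⟨hτc3, hτs3⟩ := htr0 (fun s => ((-s : ℝ), s)) (continuous_neg.prodMk continuous_id)
    (fun s => by rw [Prod.norm_def]; simp only [Real.norm_eq_abs]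
                 exact le_max_of_le_right (le_refl _))
  have intτ3 : Integrable (fun s : ℝ => (ψ (-s, s)) ^ 2) :=
    hτc3.integrable_of_hasCompactSupport hτs3
  have hsplitτ : (∫ s in Set.Iio (0:ℝ), (ψ (|s|, s)) ^ 2)
      + (∫ s in Set.Ici (0:ℝ), (ψ (|s|, s)) ^ 2) = ∫ s : ℝ, (ψ (|s|, s)) ^ 2 :=
    intervalIntegral.integral_Iio_add_Ici intτ.integrableOn intτ.integrableOn
  have hpos : (∫ s in Set.Ici (0:ℝ), (ψ (|s|, s)) ^ 2)
      = ∫ s in Set.Ici (0:ℝ), (ψ (s, s)) ^ 2 := by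
    apply setIntegral_congr_fun measurableSet_Ici
    intro s hs
    show ψ (|s|, s) ^ 2 = ψ (s, s) ^ 2
    rw [abs_of_nonneg (Set.mem_Ici.mp hs)]
  have hneg : (∫ s in Set.Iio (0:ℝ), (ψ (|s|, s)) ^ 2)
      = ∫ s in Set.Ici (0:ℝ), (ψ (s, -s)) ^ 2 := by
    have e1 : (∫ s in Set.Iio (0:ℝ), (ψ (|s|, s)) ^ 2)
        = ∫ s in Set.Iio (0:ℝ), (ψ (-s, s)) ^ 2 := by
      apply setIntegral_congr_fun measurableSet_Iio
      intro s hs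
      show ψ (|s|, s) ^ 2 = ψ (-s, s) ^ 2
      rw [abs_of_neg (Set.mem_Iio.mp hs)]
    have e2 : (∫ s in Set.Iio (0:ℝ), (ψ (-s, s)) ^ 2)
        = ∫ s in Set.Iic (0:ℝ), (ψ (-s, s)) ^ 2 :=
      setIntegral_congr_set Iio_ae_eq_Iic
    have e3 : (∫ x in Set.Ioi (0:ℝ), (ψ (-(-x), -x)) ^ 2)
        = ∫ s in Set.Iic (-(0:ℝ)), (ψ (-s, s)) ^ 2 :=
      integral_comp_neg_Ioi 0 (fun s => (ψ (-s, s)) ^ 2)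
    simp only [neg_neg, neg_zero] at e3
    have e4 : (∫ x in Set.Ioi (0:ℝ), (ψ (x, -x)) ^ 2)
        = ∫ x in Set.Ici (0:ℝ), (ψ (x, -x)) ^ 2 :=
      setIntegral_congr_set Ioi_ae_eq_Ici
    rw [e1, e2, ← e3, e4]
  have hC : (∫ s : ℝ, (ψ (|s|, s)) ^ 2)
      = ∫ x in Set.Ici (0:ℝ), ((ψ (x, x)) ^ 2 + (ψ (x, -x)) ^ 2) := by
    rw [← hsplitτ, hpos, hneg,
      integral_add intτ1.integrableOn intτ2.integrableOn]
    ring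
  set γ : ℝ → ℝ := Set.indicator (Set.Ici (0:ℝ)) (fun x => (ψ (x, x)) ^ 2 + (ψ (x, -x)) ^ 2)
    with hγdef
  have hCγ : (∫ s : ℝ, (ψ (|s|, s)) ^ 2) = ∫ x : ℝ, γ x := by
    rw [hC, hγdef, integral_indicator measurableSet_Ici]
  have intγ : Integrable γ := (intτ1.add intτ2).indicator measurableSet_Ici
  -- pointwise fiber inequality
  have hptw : ∀ x : ℝ, γ x + (∫ y : ℝ, μt x * (ψ (x, y)) ^ 2)
      ≤ ∫ y : ℝ, (fderiv ℝ ψ (x, y) (0, 1)) ^ 2 := by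
    intro x
    obtain ⟨hfd, hfc', hfs⟩ := slice_props' ψ hψ hc x
    have hBi : (∫ y : ℝ, (fderiv ℝ ψ (x, y) (0, 1)) ^ 2)
        = ∫ y : ℝ, (deriv (fun t => ψ (x, t)) y) ^ 2 := by
      apply integral_congr_ae
      filter_upwards with y
      rw [(hder2 (x, y)).deriv]
    by_cases hx : 0 ≤ x
    · have hγx : γ x = (ψ (x, x)) ^ 2 + (ψ (x, -x)) ^ 2 :=
        Set.indicator_of_mem (Set.mem_Ici.mpr hx) _
      have hμx : μt x = -(lam1 x) ^ 2 := if_pos hx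
      have hDx : (∫ y : ℝ, μt x * (ψ (x, y)) ^ 2) = μt x * ∫ y : ℝ, (ψ (x, y)) ^ 2 :=
        MeasureTheory.integral_const_mul _ _
      obtain ⟨⟨hl1, hl2⟩, hle⟩ := hlam1 x hx
      have hkey := keyval' (lam1 x) x hle
      have h1d := onedim' x (lam1 x) hx hkey (fun y => ψ (x, y)) hfd hfc' hfs
      rw [hBi, hγx, hDx, hμx]
      linarith
    · have hγx : γ x = 0 :=
        Set.indicator_of_notMem (fun hmem => hx (Set.mem_Ici.mp hmem)) _
      have hμx : μt x = 0 := if_neg hx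
      have hDx : (∫ y : ℝ, μt x * (ψ (x, y)) ^ 2) = 0 := by
        rw [hμx]; simp
      rw [hγx, hDx, hBi]
      simpa using integral_nonneg (fun y => sq_nonneg (deriv (fun t => ψ (x, t)) y))
  -- combine
  have hmain : (∫ s : ℝ, (ψ (|s|, s)) ^ 2) + (∫ p : ℝ × ℝ, μt p.1 * (ψ p) ^ 2)
      ≤ ∫ p : ℝ × ℝ, (fderiv ℝ ψ p (0, 1)) ^ 2 := by
    rw [hCγ, hB, hD, ← integral_add intγ intDm]
    exact integral_mono (intγ.add intDm) intB' hptw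
  have hA : (0:ℝ) ≤ ∫ p : ℝ × ℝ, h ^ 2 * (fderiv ℝ ψ p (1, 0)) ^ 2 :=
    integral_nonneg (fun p => by positivity)
  have hDlow : - (∫ p : ℝ × ℝ, (ψ p) ^ 2) ≤ ∫ p : ℝ × ℝ, μt p.1 * (ψ p) ^ 2 := by
    rw [← integral_neg]
    apply integral_mono intψ2.neg intD
    intro p
    simp only [Pi.neg_apply]
    have h1 := (hμt_bd p.1).1
    nlinarith [sq_nonneg (ψ p)]
  constructor
  · rw [eL, eR]
    linarith
  · rw [eL]
    linarith
end

section
/- For every x > 0 there exists a unique λ ≥ 1/2 satisfying (2λ − 1)e^{2λx} = 1, and this λ lies in the open interval (1/2, 1); for x = 0 the unique λ ≥ 1/2 satisfying (2λ − 1)e^{2λx} = 1 is λ = 1. -/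
open Real

theorem stmt_2 :
    (∀ x : ℝ, 0 < x →
      (∃! lam : ℝ, 1/2 ≤ lam ∧ (2 * lam - 1) * Real.exp (2 * lam * x) = 1) ∧
      (∀ lam : ℝ, 1/2 ≤ lam → (2 * lam - 1) * Real.exp (2 * lam * x) = 1 →
        lam ∈ Set.Ioo (1/2 : ℝ) 1)) ∧
    (∀ lam : ℝ, 1/2 ≤ lam →
      ((2 * lam - 1) * Real.exp (2 * lam * 0) = 1 ↔ lam = 1)) := by
  constructor
  · intro x hx
    have key : ∀ a b : ℝ, 1/2 ≤ a → a < b →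
        (2*a-1)*Real.exp (2*a*x) < (2*b-1)*Real.exp (2*b*x) := by
      intro a b ha hab
      have h1 : Real.exp (2*a*x) < Real.exp (2*b*x) := by
        apply Real.exp_lt_exp.2; nlinarith
      have h2 : 0 ≤ 2*a-1 := by linarith
      have h3 : 2*a-1 < 2*b-1 := by linarith
      nlinarith [Real.exp_pos (2*a*x), Real.exp_pos (2*b*x)]
    have hexp1 : (1:ℝ) < Real.exp (2*1*x) := by
      rw [show (2:ℝ)*1*x = 2*x by ring]
      have : Real.exp 0 < Real.exp (2*x) := Real.exp_lt_exp.2 (by linarith)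
      simpa using this
    have mem : ∀ lam : ℝ, 1/2 ≤ lam → (2*lam-1)*Real.exp (2*lam*x) = 1 →
        lam ∈ Set.Ioo (1/2:ℝ) 1 := by
      intro lam hl he
      constructor
      · rcases lt_or_eq_of_le hl with h|h
        · exact h
        · exfalso; rw [← h] at he; norm_num at he
      · by_contra h
        push_neg at h
        have h1 : (2*1-1)*Real.exp (2*1*x) ≤ (2*lam-1)*Real.exp (2*lam*x) := by
          rcases lt_or_eq_of_le h with h'|h'
          · exact le_of_lt (key 1 lam (by norm_num) h')
          · rw [h']
        rw [he] at h1
        nlinarith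
    refine ⟨?_, mem⟩
    have hc : ContinuousOn (fun lam : ℝ => (2*lam-1)*Real.exp (2*lam*x)) (Set.Icc (1/2:ℝ) 1) :=
      (Continuous.mul (by continuity) (by continuity)).continuousOn
    have hival := intermediate_value_Icc (by norm_num : (1/2:ℝ) ≤ 1) hc
    have hmem : (1:ℝ) ∈ Set.Icc ((2*(1/2:ℝ)-1)*Real.exp (2*(1/2)*x))
        ((2*(1:ℝ)-1)*Real.exp (2*1*x)) := by
      constructor
      · norm_num
      · nlinarith
    obtain ⟨lam, hlam, he⟩ := hival hmem
    replace he : (2*lam-1)*Real.exp (2*lam*x) = 1 := he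
    refine ⟨lam, ⟨hlam.1, he⟩, ?_⟩
    rintro y ⟨hy1, hy2⟩
    by_contra hne
    rcases lt_trichotomy y lam with h|h|h
    · have := key y lam hy1 h; rw [hy2, he] at this; linarith
    · exact hne h
    · have := key lam y hlam.1 h; rw [hy2, he] at this; linarith
  · intro lam _
    constructor
    · intro h
      simp only [mul_zero, Real.exp_zero, mul_one] at h
      linarith
    · intro h
      subst h
      norm_num
end

section
/- There exist C > 0 and x₀ > 0 such that for all x ∈ (0, x₀): |μ₁(x) − (−1 + 2x)| ≤ C x², i.e. μ₁(x) = −1 + 2x + O(x²) as x → 0⁺. -/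
open Real

theorem stmt_4 (lam1 : ℝ → ℝ)
    (hlam1 : ∀ x : ℝ, 0 ≤ x → lam1 x ∈ Set.Ioc (1/2 : ℝ) 1 ∧
      (2 * lam1 x - 1) * Real.exp (2 * lam1 x * x) = 1) :
    ∃ C > (0 : ℝ), ∃ x₀ > (0 : ℝ), ∀ x ∈ Set.Ioo (0 : ℝ) x₀,
      |(-(lam1 x) ^ 2) - (-1 + 2 * x)| ≤ C * x ^ 2 := by
  refine ⟨16, by norm_num, 1/2, by norm_num, ?_⟩
  rintro x ⟨hx0, hx1⟩
  obtain ⟨⟨hl, hu⟩, heq⟩ := hlam1 x hx0.le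
  set l := lam1 x with hldef
  have hEpos : 0 < Real.exp (2 * l * x) := Real.exp_pos _
  have h2l : 2 * l - 1 = (Real.exp (2 * l * x))⁻¹ := by
    field_simp
    linarith [heq]
  -- lower bound: 1 - 2*l*x ≤ 2*l - 1
  have hlow' : 1 - 2 * l * x ≤ 2 * l - 1 := by
    have h := Real.add_one_le_exp (-(2 * l * x))
    rw [Real.exp_neg] at h
    linarith [h2l ▸ h]
  -- so l ≥ 1 - x
  have hlow : 1 - x ≤ l := by nlinarith [sq_nonneg x, sq_nonneg (l*x - x)]
  -- upper bound: (2*l-1)*(2*l*x+1) ≤ 1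
  have h1 : 2 * l * x + 1 ≤ Real.exp (2 * l * x) := Real.add_one_le_exp _
  have hA : (2 * l - 1) * (2 * l * x + 1) ≤ 1 := by
    have h2lpos : 0 < 2 * l - 1 := by linarith
    calc (2 * l - 1) * (2 * l * x + 1) ≤ (2 * l - 1) * Real.exp (2 * l * x) := by
          exact mul_le_mul_of_nonneg_left h1 h2lpos.le
      _ = 1 := heq
  rw [abs_le]
  constructor
  · nlinarith [sq_nonneg (l - (1 - x)), sq_nonneg x, mul_pos hx0 hx0, sq_nonneg (l*x), sq_nonneg (l - 1)]
  · nlinarith [sq_nonneg (l - (1 - x)), sq_nonneg x]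
end

section
/- There exist C > 0 and x₀ > 1 such that for all x ≥ x₀: |μ₁(x) − (−1/4 − e^{−x}/2)| ≤ C x e^{−2x} and |μ₂(x) − (−1/4 + e^{−x}/2)| ≤ C x e^{−2x}, i.e. μ₁(x) = −1/4 − e^{−x}/2 + O(x e^{−2x}) and μ₂(x) = −1/4 + e^{−x}/2 + O(x e^{−2x}) as x → +∞. -/
open Real

set_option maxHeartbeats 1600000 in
theorem stmt_5 (lam1 lam2 : ℝ → ℝ)
    (hlam1 : ∀ x : ℝ, 0 ≤ x → lam1 x ∈ Set.Ioc (1/2 : ℝ) 1 ∧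
      (2 * lam1 x - 1) * Real.exp (2 * lam1 x * x) = 1)
    (hlam2 : ∀ x : ℝ, 1 < x → lam2 x ∈ Set.Ioo (0 : ℝ) (1/2) ∧
      (1 - 2 * lam2 x) * Real.exp (2 * lam2 x * x) = 1) :
    ∃ C > (0 : ℝ), ∃ x₀ > (1 : ℝ), ∀ x ≥ x₀,
      |(-(lam1 x) ^ 2) - (-1/4 - Real.exp (-x) / 2)| ≤ C * x * Real.exp (-2 * x) ∧
      |(-(lam2 x) ^ 2) - (-1/4 + Real.exp (-x) / 2)| ≤ C * x * Real.exp (-2 * x) := by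
  refine ⟨7, by norm_num, 2, by norm_num, fun x hx => ?_⟩
  have hx1 : (1:ℝ) < x := by linarith
  have hx0 : (0:ℝ) ≤ x := by linarith
  have hx2 : (2:ℝ) ≤ x := hx
  obtain ⟨hm1, he1⟩ := hlam1 x hx0
  obtain ⟨hm2, he2⟩ := hlam2 x hx1
  have hEx : (0:ℝ) < Real.exp (-x) := Real.exp_pos _
  have hE2x : Real.exp (-2*x) = Real.exp (-x) * Real.exp (-x) := by
    rw [← Real.exp_add]; ring_nf
  constructor
  · -- part 1
    have hl1 : 1/2 < lam1 x := hm1.1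
    have h1 : 2*(lam1 x) - 1 = Real.exp (-(2*(lam1 x)*x)) := by
      have hp := Real.exp_pos (2*(lam1 x)*x)
      rw [Real.exp_neg]
      field_simp
      linarith [he1]
    obtain ⟨ε, hε⟩ : ∃ ε : ℝ, ε = lam1 x - 1/2 := ⟨_, rfl⟩
    have hεpos : 0 < ε := by rw [hε]; linarith
    have hsplit : Real.exp (-(2*(lam1 x)*x)) = Real.exp (-x) * Real.exp (-(2*ε*x)) := by
      rw [← Real.exp_add]; congr 1; rw [hε]; ring
    have hkey : 2*ε = Real.exp (-x) * Real.exp (-(2*ε*x)) := by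
      rw [← hsplit, ← h1, hε]; ring
    have hE1 : Real.exp (-(2*ε*x)) ≤ 1 := by
      rw [Real.exp_le_one_iff]; nlinarith
    have hEp : 0 < Real.exp (-(2*ε*x)) := Real.exp_pos _
    have hεle : 2*ε ≤ Real.exp (-x) := by nlinarith
    have h1me : 1 - Real.exp (-(2*ε*x)) ≤ 2*ε*x := by
      have := Real.add_one_le_exp (-(2*ε*x)); linarith
    have hlv : lam1 x = 1/2 + ε := by rw [hε]; ring
    rw [hlv, abs_le]
    constructor
    · have hsq : (2*ε)*(2*ε) ≤ Real.exp (-x) * Real.exp (-x) :=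
        mul_le_mul hεle hεle (by linarith) hEx.le
      nlinarith [Real.exp_pos (-2*x)]
    · have hprod : Real.exp (-x) * (1 - Real.exp (-(2*ε*x))) ≤ Real.exp (-x) * (2*ε*x) :=
        mul_le_mul_of_nonneg_left h1me hEx.le
      have hprod2 : Real.exp (-x) * (2*ε*x) ≤ Real.exp (-x) * (Real.exp (-x) * x) := by
        apply mul_le_mul_of_nonneg_left _ hEx.le
        nlinarith
      nlinarith [sq_nonneg ε, Real.exp_pos (-2*x)]
  · -- part 2
    have hm0 : 0 < lam2 x := hm2.1
    have hmh : lam2 x < 1/2 := hm2.2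
    have h1 : 1 - 2*(lam2 x) = Real.exp (-(2*(lam2 x)*x)) := by
      have hp := Real.exp_pos (2*(lam2 x)*x)
      rw [Real.exp_neg]
      field_simp
      linarith [he2]
    obtain ⟨d, hd⟩ : ∃ d : ℝ, d = 1/2 - lam2 x := ⟨_, rfl⟩
    have hdpos : 0 < d := by rw [hd]; linarith
    have hdh : d < 1/2 := by rw [hd]; linarith
    have hsplit : Real.exp (-(2*(lam2 x)*x)) = Real.exp (-x) * Real.exp (2*d*x) := by
      rw [← Real.exp_add]; congr 1; rw [hd]; ring
    have hkey : 2*d = Real.exp (-x) * Real.exp (2*d*x) := by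
      have h2d : 2*d = 1 - 2*(lam2 x) := by rw [hd]; ring
      have hk := hsplit
      rw [← h1] at hk
      linarith [hk]
    have hvpos : 0 < 2*(lam2 x)*x := by positivity
    have hv_eq : 2*(lam2 x)*x = x * (1 - Real.exp (-(2*(lam2 x)*x))) := by
      rw [← h1]; ring
    have h1v : (2*(lam2 x)*x + 1) * Real.exp (-(2*(lam2 x)*x)) ≤ 1 := by
      have h := mul_le_mul_of_nonneg_right (Real.add_one_le_exp (2*(lam2 x)*x))
        (Real.exp_pos (-(2*(lam2 x)*x))).le
      rw [← Real.exp_add] at h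
      simp at h
      nlinarith [Real.exp_pos (-(2*(lam2 x)*x))]
    have hxv : x - 1 ≤ 2*(lam2 x)*x := by
      have hx' := mul_le_mul_of_nonneg_left h1v hx0
      nlinarith [Real.exp_pos (-(2*(lam2 x)*x))]
    have hele : Real.exp (-(2*(lam2 x)*x)) ≤ Real.exp 1 * Real.exp (-x) := by
      rw [← Real.exp_add]
      exact Real.exp_le_exp.mpr (by linarith)
    have he3 : Real.exp 1 < 3 := by
      have := Real.exp_one_lt_d9; linarith
    have hdle : 2*d ≤ 3 * Real.exp (-x) := by
      have h' : 1 - 2*(lam2 x) ≤ 3 * Real.exp (-x) := by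
        rw [h1]
        calc Real.exp (-(2*(lam2 x)*x)) ≤ Real.exp 1 * Real.exp (-x) := hele
          _ ≤ 3 * Real.exp (-x) := by nlinarith
      rw [hd]; linarith
    have hE2pos : 0 < Real.exp (2*d*x) := Real.exp_pos _
    have hE2le : Real.exp (2*d*x) ≤ 3 := by
      have h' : Real.exp (-x) * Real.exp (2*d*x) ≤ Real.exp (-x) * 3 := by
        rw [← hkey]; linarith
      exact le_of_mul_le_mul_left h' hEx
    have hE2ge : 1 ≤ Real.exp (2*d*x) := Real.one_le_exp (by positivity)
    have hE2m1 : Real.exp (2*d*x) - 1 ≤ 2*d*x * Real.exp (2*d*x) := by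
      have h0 : (1 - 2*d*x) * Real.exp (2*d*x) ≤ 1 := by
        have h := mul_le_mul_of_nonneg_right (Real.add_one_le_exp (-(2*d*x))) hE2pos.le
        calc (1 - 2*d*x) * Real.exp (2*d*x) = (-(2*d*x)+1) * Real.exp (2*d*x) := by ring
          _ ≤ Real.exp (-(2*d*x)) * Real.exp (2*d*x) := h
          _ = 1 := by rw [← Real.exp_add]; simp
      linarith [h0]
    have hmv : lam2 x = 1/2 - d := by rw [hd]; ring
    rw [hmv, abs_le]
    have hdx : 2*d*x ≤ 3 * x * Real.exp (-x) := by nlinarith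
    have hE2m1' : Real.exp (2*d*x) - 1 ≤ 9 * x * Real.exp (-x) := by nlinarith
    constructor
    · have hsq : (2*d)*(2*d) ≤ (3*Real.exp (-x)) * (3*Real.exp (-x)) :=
        mul_le_mul hdle hdle (by linarith) (by positivity)
      nlinarith [Real.exp_pos (-2*x)]
    · have hdexp : d - Real.exp (-x)/2 = (Real.exp (-x)/2) * (Real.exp (2*d*x) - 1) := by
        nlinarith [hkey]
      have hfin : (Real.exp (-x)/2) * (Real.exp (2*d*x) - 1) ≤
          (Real.exp (-x)/2) * (9 * x * Real.exp (-x)) :=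
        mul_le_mul_of_nonneg_left hE2m1' (by positivity)
      nlinarith [sq_nonneg d]
end

section
/- Fix x > 0. The function ψ_{x,1} is continuous on ℝ, is twice continuously differentiable on ℝ ∖ {−x, x} where it satisfies −ψ_{x,1}″(y) = μ₁(x) ψ_{x,1}(y), and at the two points y = ±x its derivative has the jump lim_{ε→0⁺}(ψ_{x,1}′(±x + ε) − ψ_{x,1}′(±x − ε)) = −ψ_{x,1}(±x); that is, ψ_{x,1} is an eigenfunction of the double δ-well operator −d²/dy² − δ_{−x} − δ_x with eigenvalue μ₁(x). -/
open Real Filter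

theorem stmt_8 (x : ℝ) (hx : 0 < x) (lam : ℝ)
    (hlam : lam ∈ Set.Ioc (1/2 : ℝ) 1 ∧ (2 * lam - 1) * Real.exp (2 * lam * x) = 1)
    (ψ : ℝ → ℝ)
    (hψ1 : ∀ y : ℝ, y ≤ -x → ψ y = Real.exp (lam * (x + y)))
    (hψ2 : ∀ y : ℝ, -x < y → y < x → ψ y = Real.cosh (lam * y) / Real.cosh (lam * x))
    (hψ3 : ∀ y : ℝ, x ≤ y → ψ y = Real.exp (lam * (x - y))) :
    Continuous ψ ∧
    ContDiffOn ℝ 2 ψ ({-x, x} : Set ℝ)ᶜ ∧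
    (∀ y : ℝ, y ≠ -x → y ≠ x → -(deriv (deriv ψ) y) = (-(lam ^ 2)) * ψ y) ∧
    Filter.Tendsto (fun ε : ℝ => deriv ψ (x + ε) - deriv ψ (x - ε))
      (nhdsWithin 0 (Set.Ioi 0)) (nhds (-(ψ x))) ∧
    Filter.Tendsto (fun ε : ℝ => deriv ψ (-x + ε) - deriv ψ (-x - ε))
      (nhdsWithin 0 (Set.Ioi 0)) (nhds (-(ψ (-x)))) := by
  set f1 : ℝ → ℝ := fun y => Real.exp (lam * (x + y)) with hf1
  set f2 : ℝ → ℝ := fun y => Real.cosh (lam * y) / Real.cosh (lam * x) with hf2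
  set f3 : ℝ → ℝ := fun y => Real.exp (lam * (x - y)) with hf3
  have hcoshpos : 0 < Real.cosh (lam * x) := Real.cosh_pos (lam * x)
  -- derivative facts
  have hD1 : ∀ y : ℝ, HasDerivAt f1 (lam * Real.exp (lam * (x + y))) y := by
    intro y
    have h : HasDerivAt (fun y : ℝ => lam * (x + y)) lam y := by
      simpa using ((hasDerivAt_const y x).add (hasDerivAt_id y)).const_mul lam
    simpa [mul_comm] using h.exp
  have hD2 : ∀ y : ℝ, HasDerivAt f2 (lam * Real.sinh (lam * y) / Real.cosh (lam * x)) y := by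
    intro y
    have h : HasDerivAt (fun y : ℝ => lam * y) lam y := by
      simpa using (hasDerivAt_id y).const_mul lam
    have h2 := (h.cosh).div_const (Real.cosh (lam * x))
    rw [show Real.sinh (lam * y) * lam / Real.cosh (lam * x)
        = lam * Real.sinh (lam * y) / Real.cosh (lam * x) from by ring] at h2
    exact h2
  have hD3 : ∀ y : ℝ, HasDerivAt f3 (-(lam * Real.exp (lam * (x - y)))) y := by
    intro y
    have h : HasDerivAt (fun y : ℝ => lam * (x - y)) (-lam) y := by
      simpa using ((hasDerivAt_const y x).sub (hasDerivAt_id y)).const_mul lam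
    have := h.exp
    rw [show Real.exp (lam * (x - y)) * (-lam) = -(lam * Real.exp (lam * (x - y))) by ring] at this
    exact this
  -- second derivative facts (of the derivative formulas)
  have hDD1 : ∀ y : ℝ, HasDerivAt (fun y => lam * Real.exp (lam * (x + y)))
      (lam ^ 2 * Real.exp (lam * (x + y))) y := by
    intro y
    have := (hD1 y).const_mul lam
    simpa [hf1, sq, mul_assoc] using this
  have hDD2 : ∀ y : ℝ, HasDerivAt (fun y => lam * Real.sinh (lam * y) / Real.cosh (lam * x))
      (lam ^ 2 * Real.cosh (lam * y) / Real.cosh (lam * x)) y := by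
    intro y
    have h : HasDerivAt (fun y : ℝ => lam * y) lam y := by
      simpa using (hasDerivAt_id y).const_mul lam
    have := ((h.sinh).const_mul lam).div_const (Real.cosh (lam * x))
    have e : lam * (Real.cosh (lam * y) * lam) / Real.cosh (lam * x)
        = lam ^ 2 * Real.cosh (lam * y) / Real.cosh (lam * x) := by ring
    simpa [mul_div_assoc, e] using this
  have hDD3 : ∀ y : ℝ, HasDerivAt (fun y => -(lam * Real.exp (lam * (x - y))))
      (lam ^ 2 * Real.exp (lam * (x - y))) y := by
    intro y
    have h2 := ((hD3 y).const_mul lam).neg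
    rw [show -(lam * -(lam * Real.exp (lam * (x - y)))) = lam ^ 2 * Real.exp (lam * (x - y))
        from by ring] at h2
    exact h2
  -- eventual equalities
  have hev1 : ∀ y : ℝ, y < -x → ψ =ᶠ[nhds y] f1 := fun y hy =>
    Filter.eventuallyEq_of_mem (Iio_mem_nhds hy) (fun z hz => hψ1 z (le_of_lt hz))
  have hev2 : ∀ y : ℝ, -x < y → y < x → ψ =ᶠ[nhds y] f2 := fun y hy1 hy2 =>
    Filter.eventuallyEq_of_mem (Ioo_mem_nhds hy1 hy2) (fun z hz => hψ2 z hz.1 hz.2)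
  have hev3 : ∀ y : ℝ, x < y → ψ =ᶠ[nhds y] f3 := fun y hy =>
    Filter.eventuallyEq_of_mem (Ioi_mem_nhds hy) (fun z hz => hψ3 z (le_of_lt hz))
  -- derivative of ψ at points
  have hd1 : ∀ y : ℝ, y < -x → deriv ψ y = lam * Real.exp (lam * (x + y)) := fun y hy => by
    rw [(hev1 y hy).deriv_eq, (hD1 y).deriv]
  have hd2 : ∀ y : ℝ, -x < y → y < x →
      deriv ψ y = lam * Real.sinh (lam * y) / Real.cosh (lam * x) := fun y hy1 hy2 => by
    rw [(hev2 y hy1 hy2).deriv_eq, (hD2 y).deriv]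
  have hd3 : ∀ y : ℝ, x < y → deriv ψ y = -(lam * Real.exp (lam * (x - y))) := fun y hy => by
    rw [(hev3 y hy).deriv_eq, (hD3 y).deriv]
  -- values
  have hψx : ψ x = 1 := by rw [hψ3 x le_rfl]; simp
  have hψnx : ψ (-x) = 1 := by rw [hψ1 (-x) le_rfl]; simp
  -- key identity
  have hkey : lam + lam * Real.sinh (lam * x) / Real.cosh (lam * x) = 1 := by
    have hE : Real.exp (2 * lam * x) = Real.exp (lam * x) ^ 2 := by
      rw [← Real.exp_nat_mul]; ring_nf
    have hEpos : 0 < Real.exp (lam * x) := Real.exp_pos _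
    have h2 := hlam.2
    rw [hE] at h2
    rw [Real.sinh_eq, Real.cosh_eq, Real.exp_neg]
    have hc : Real.exp (lam * x) + (Real.exp (lam * x))⁻¹ ≠ 0 := by positivity
    field_simp
    nlinarith [hEpos]
  -- continuity
  have hc1 : Continuous f1 :=
    Real.continuous_exp.comp (continuous_const.mul (continuous_const.add continuous_id))
  have hc2 : Continuous f2 :=
    (Real.continuous_cosh.comp (continuous_const.mul continuous_id)).div_const _
  have hc3 : Continuous f3 :=
    Real.continuous_exp.comp (continuous_const.mul (continuous_const.sub continuous_id))
  have hf2nx : f2 (-x) = 1 := by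
    show Real.cosh (lam * (-x)) / Real.cosh (lam * x) = 1
    rw [mul_neg, Real.cosh_neg]
    exact div_self (ne_of_gt hcoshpos)
  have hf2x : f2 x = 1 := div_self (ne_of_gt hcoshpos)
  have hcont : Continuous ψ := by
    rw [continuous_iff_continuousAt]
    intro y
    rcases lt_trichotomy y (-x) with hy | hy | hy
    · exact (hc1.continuousAt).congr (hev1 y hy).symm
    · subst hy
      rw [continuousAt_iff_continuous_left_right]
      constructor
      · exact (hc1.continuousWithinAt).congr (fun z hz => hψ1 z hz) (hψ1 _ le_rfl)
      · have hIco : ContinuousWithinAt ψ (Set.Ico (-x) x) (-x) := by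
          refine (hc2.continuousWithinAt).congr (fun z hz => ?_) (by rw [hψnx, hf2nx])
          rcases eq_or_lt_of_le hz.1 with h | h
          · rw [← h, hψnx, hf2nx]
          · exact hψ2 z h hz.2
        refine hIco.mono_of_mem_nhdsWithin ?_
        rw [← Set.Ici_inter_Iio]
        exact Filter.inter_mem self_mem_nhdsWithin
          (mem_nhdsWithin_of_mem_nhds (Iio_mem_nhds (by linarith)))
    · rcases lt_trichotomy y x with hy2 | hy2 | hy2
      · exact (hc2.continuousAt).congr (hev2 y hy hy2).symm
      · rw [hy2, continuousAt_iff_continuous_left_right]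
        constructor
        · have hIoc : ContinuousWithinAt ψ (Set.Ioc (-x) x) x := by
            refine (hc2.continuousWithinAt).congr (fun z hz => ?_) (by rw [hψx, hf2x])
            rcases eq_or_lt_of_le hz.2 with h | h
            · rw [h, hψx, hf2x]
            · exact hψ2 z hz.1 h
          refine hIoc.mono_of_mem_nhdsWithin ?_
          rw [← Set.Ioi_inter_Iic]
          exact Filter.inter_mem
            (mem_nhdsWithin_of_mem_nhds (Ioi_mem_nhds (by linarith))) self_mem_nhdsWithin
        · exact (hc3.continuousWithinAt).congr (fun z hz => hψ3 z hz) (hψ3 _ le_rfl)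
      · exact (hc3.continuousAt).congr (hev3 y hy2).symm
  refine ⟨hcont, ?_, ?_, ?_, ?_⟩
  · -- ContDiffOn
    intro y hy
    simp only [Set.mem_compl_iff, Set.mem_insert_iff, Set.mem_singleton_iff, not_or] at hy
    rcases lt_trichotomy y (-x) with h | h | h
    · exact (((Real.contDiff_exp.comp
        ((contDiff_const (c := lam)).mul (contDiff_const.add contDiff_id))).contDiffAt).congr_of_eventuallyEq
        (hev1 y h)).contDiffWithinAt
    · exact absurd h hy.1
    · rcases lt_trichotomy y x with h2 | h2 | h2
      · exact (((Real.contDiff_cosh.comp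
          ((contDiff_const (c := lam)).mul contDiff_id)).div_const _).contDiffAt.congr_of_eventuallyEq
          (hev2 y h h2)).contDiffWithinAt
      · exact absurd h2 hy.2
      · exact (((Real.contDiff_exp.comp
          ((contDiff_const (c := lam)).mul (contDiff_const.sub contDiff_id))).contDiffAt).congr_of_eventuallyEq
          (hev3 y h2)).contDiffWithinAt
  · -- the ODE
    intro y hy1 hy2
    rcases lt_trichotomy y (-x) with h | h | h
    · have hev : deriv ψ =ᶠ[nhds y] fun z => lam * Real.exp (lam * (x + z)) := by
        refine Filter.eventuallyEq_of_mem (Iio_mem_nhds h) (fun z hz => ?_)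
        exact hd1 z hz
      rw [hev.deriv_eq, (hDD1 y).deriv, hψ1 y (le_of_lt h)]
      ring
    · exact absurd h hy1
    · rcases lt_trichotomy y x with h2 | h2 | h2
      · have hev : deriv ψ =ᶠ[nhds y] fun z => lam * Real.sinh (lam * z) / Real.cosh (lam * x) := by
          refine Filter.eventuallyEq_of_mem (Ioo_mem_nhds h h2) (fun z hz => hd2 z hz.1 hz.2)
        rw [hev.deriv_eq, (hDD2 y).deriv, hψ2 y h h2]
        ring
      · exact absurd h2 hy2
      · have hev : deriv ψ =ᶠ[nhds y] fun z => -(lam * Real.exp (lam * (x - z))) := by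
          refine Filter.eventuallyEq_of_mem (Ioi_mem_nhds h2) (fun z hz => hd3 z hz)
        rw [hev.deriv_eq, (hDD3 y).deriv, hψ3 y (le_of_lt h2)]
        ring
  · -- jump at x
    set g : ℝ → ℝ := fun ε => -(lam * Real.exp (lam * (x - (x + ε)))) -
      lam * Real.sinh (lam * (x - ε)) / Real.cosh (lam * x) with hg
    have hgc : Continuous g := by
      refine Continuous.sub ?_ ?_
      · exact (continuous_const.mul (Real.continuous_exp.comp (continuous_const.mul
          (continuous_const.sub (continuous_const.add continuous_id))))).neg
      · exact (continuous_const.mul (Real.continuous_sinh.comp (continuous_const.mul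
          (continuous_const.sub continuous_id)))).div_const _
    have hg0 : g 0 = -(ψ x) := by
      rw [hψx, hg]
      simp only [add_zero, sub_zero, sub_self, mul_zero, Real.exp_zero, mul_one]
      linarith [hkey]
    have htend : Filter.Tendsto g (nhdsWithin 0 (Set.Ioi 0)) (nhds (-(ψ x))) := by
      rw [← hg0]
      exact (hgc.tendsto 0).mono_left nhdsWithin_le_nhds
    refine htend.congr' ?_
    have hmem : Set.Ioo (0:ℝ) (2*x) ∈ nhdsWithin (0:ℝ) (Set.Ioi 0) := by
      rw [← Set.Ioi_inter_Iio]
      exact Filter.inter_mem self_mem_nhdsWithin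
        (mem_nhdsWithin_of_mem_nhds (Iio_mem_nhds (by linarith)))
    refine Filter.eventuallyEq_of_mem hmem (fun ε hε => ?_)
    have h1 : deriv ψ (x + ε) = -(lam * Real.exp (lam * (x - (x + ε)))) :=
      hd3 _ (by linarith [hε.1])
    have h2 : deriv ψ (x - ε) = lam * Real.sinh (lam * (x - ε)) / Real.cosh (lam * x) :=
      hd2 _ (by linarith [hε.2]) (by linarith [hε.1])
    rw [hg, h1, h2]
  · -- jump at -x
    set g : ℝ → ℝ := fun ε => lam * Real.sinh (lam * (-x + ε)) / Real.cosh (lam * x) -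
      lam * Real.exp (lam * (x + (-x - ε))) with hg
    have hgc : Continuous g := by
      refine Continuous.sub ?_ ?_
      · exact (continuous_const.mul (Real.continuous_sinh.comp (continuous_const.mul
          (continuous_const.add continuous_id)))).div_const _
      · exact continuous_const.mul (Real.continuous_exp.comp (continuous_const.mul
          (continuous_const.add (continuous_const.sub continuous_id))))
    have hg0 : g 0 = -(ψ (-x)) := by
      rw [hψnx, hg]
      simp only [add_zero, sub_zero, mul_neg, Real.sinh_neg, neg_div]
      rw [show lam * (x + -x) = 0 by ring, Real.exp_zero, mul_one]
      linarith [hkey]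
    have htend : Filter.Tendsto g (nhdsWithin 0 (Set.Ioi 0)) (nhds (-(ψ (-x)))) := by
      rw [← hg0]
      exact (hgc.tendsto 0).mono_left nhdsWithin_le_nhds
    refine htend.congr' ?_
    have hmem : Set.Ioo (0:ℝ) (2*x) ∈ nhdsWithin (0:ℝ) (Set.Ioi 0) := by
      rw [← Set.Ioi_inter_Iio]
      exact Filter.inter_mem self_mem_nhdsWithin
        (mem_nhdsWithin_of_mem_nhds (Iio_mem_nhds (by linarith)))
    refine Filter.eventuallyEq_of_mem hmem (fun ε hε => ?_)
    have h1 : deriv ψ (-x + ε) = lam * Real.sinh (lam * (-x + ε)) / Real.cosh (lam * x) :=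
      hd2 _ (by linarith [hε.1]) (by linarith [hε.2])
    have h2 : deriv ψ (-x - ε) = lam * Real.exp (lam * (x + (-x - ε))) :=
      hd1 _ (by linarith [hε.1])
    rw [hg, h1, h2]
end

section
/- For every x > 0 and every y ∈ ℝ one has the pointwise bounds 1_{{y ≤ −x}} e^{λ₁(x)(x+y)} + 1_{{y ≥ x}} e^{λ₁(x)(x−y)} ≤ ψ_{x,1}(y) ≤ e^{−λ₁(x)|x+y|} + e^{−λ₁(x)|y−x|}; consequently there exist constants 0 < c ≤ C < ∞, independent of x, such that c ≤ (∫_ℝ |ψ_{x,1}(y)|² dy)^{1/2} ≤ C for all x > 0. -/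
/-!
On `|y| ≥ x` the profile is exactly `exp (λ (x - |y|))`, and on `|y| < x` the quotient
`cosh (λ y) / cosh (λ x)` is at most `exp (-λ (x - y)) + exp (-λ (x + y))` because
`2 cosh (λ x) ≥ exp (λ x)`. Hence `ψ` lies between its two exponential tails and their sum.
Squaring, the right tail alone gives `∫ ψ² ≥ 1 / (2 λ)`, while `(a + b)² ≤ 2 a² + 2 b²` and
`∫ exp (-2 λ |y|) dy = 1 / λ` give `∫ ψ² ≤ 4 / λ`; `λ ∈ (1/2, 1]` makes both ends uniform in `x`.
-/

open Real MeasureTheory Set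

/-- `ψ_{x,1}` of the paper, with `λ₁(x)` replaced by a free parameter `l`. -/
noncomputable def psiProfile (l x y : ℝ) : ℝ :=
  if y ≤ -x then exp (l * (x + y))
  else if y < x then cosh (l * y) / cosh (l * x)
  else exp (l * (x - y))

theorem cosh_div_cosh_le (l x y : ℝ) :
    cosh (l * y) / cosh (l * x) ≤ exp (-(l * (x - y))) + exp (-(l * (x + y))) := by
  rw [div_le_iff₀ (cosh_pos _)]
  have hA : exp (-(l * (x - y))) * exp (l * x) = exp (l * y) := by
    rw [← exp_add]; ring_nf
  have hB : exp (-(l * (x + y))) * exp (l * x) = exp (-(l * y)) := by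
    rw [← exp_add]; ring_nf
  nlinarith [exp_pos (-(l * x)), exp_pos (-(l * (x - y))), exp_pos (-(l * (x + y))),
    cosh_eq (l * y), cosh_eq (l * x)]

theorem psiProfile_pos (l x y : ℝ) : 0 < psiProfile l x y := by
  unfold psiProfile
  split_ifs <;> positivity

theorem measurable_psiProfile (l x : ℝ) : Measurable (psiProfile l x) := by
  unfold psiProfile
  exact Measurable.ite measurableSet_Iic (by fun_prop)
    (Measurable.ite measurableSet_Iio (by fun_prop) (by fun_prop))

theorem ite_add_ite_le_psiProfile {x : ℝ} (hx : 0 < x) (l y : ℝ) :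
    (if y ≤ -x then exp (l * (x + y)) else 0) + (if x ≤ y then exp (l * (x - y)) else 0)
      ≤ psiProfile l x y := by
  unfold psiProfile
  split_ifs <;> (try simp only [add_zero, zero_add, le_refl]) <;> first | positivity | linarith

theorem psiProfile_le (l x y : ℝ) :
    psiProfile l x y ≤ exp (-l * |x + y|) + exp (-l * |y - x|) := by
  unfold psiProfile
  split_ifs with h₁ h₂
  · rw [abs_of_nonpos (by linarith : x + y ≤ 0)]
    exact le_add_of_le_of_nonneg (congrArg exp (by ring)).le (exp_pos _).le
  · rw [abs_of_pos (by linarith : 0 < x + y), abs_of_neg (by linarith : y - x < 0), add_comm]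
    convert cosh_div_cosh_le l x y using 3 <;> ring
  · rw [abs_of_nonneg (by linarith : 0 ≤ y - x)]
    exact le_add_of_nonneg_of_le (exp_pos _).le (congrArg exp (by ring)).le

theorem psiProfile_sq_le (l x y : ℝ) :
    psiProfile l x y ^ 2 ≤ 2 * exp (-(2 * l) * |y + x|) + 2 * exp (-(2 * l) * |y - x|) := by
  have hsq (t : ℝ) : exp (-(2 * l) * t) = exp (-l * t) ^ 2 := by
    rw [← exp_nat_mul]; ring_nf
  rw [hsq, hsq, add_comm y x]
  have := pow_le_pow_left₀ (psiProfile_pos l x y).le (psiProfile_le l x y) 2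
  nlinarith [sq_nonneg (exp (-l * |x + y|) - exp (-l * |y - x|))]

theorem integrable_exp_neg_mul_abs {b : ℝ} (hb : 0 < b) :
    Integrable fun y : ℝ => exp (-b * |y|) := by
  rw [← integrableOn_univ, ← Iic_union_Ioi (a := 0)]
  refine IntegrableOn.union ?_ ?_
  · refine (integrableOn_exp_mul_Iic hb 0).congr_fun (fun y hy => ?_) measurableSet_Iic
    rw [abs_of_nonpos hy]; ring_nf
  · refine (integrableOn_exp_mul_Ioi (neg_neg_of_pos hb) 0).congr_fun (fun y hy => ?_)
      measurableSet_Ioi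
    rw [abs_of_pos hy]

theorem integral_exp_neg_mul_abs {b : ℝ} (hb : 0 < b) :
    ∫ y : ℝ, exp (-b * |y|) = 2 / b := by
  rw [integral_comp_abs (f := fun t => exp (-b * t)),
    integral_exp_mul_Ioi (neg_neg_of_pos hb)]
  field_simp
  simp

theorem integrable_exp_tails {b : ℝ} (hb : 0 < b) (x : ℝ) :
    Integrable fun y => 2 * exp (-b * |y + x|) + 2 * exp (-b * |y - x|) :=
  (((integrable_exp_neg_mul_abs hb).comp_add_right x).const_mul 2).add
    (((integrable_exp_neg_mul_abs hb).comp_sub_right x).const_mul 2)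

theorem integrable_psiProfile_sq {l : ℝ} (hl : 0 < l) (x : ℝ) :
    Integrable fun y => psiProfile l x y ^ 2 :=
  (integrable_exp_tails (by positivity : 0 < 2 * l) x).mono'
    ((measurable_psiProfile l x).pow_const 2).aestronglyMeasurable
    (ae_of_all _ fun y => by
      rw [norm_of_nonneg (sq_nonneg _)]
      exact psiProfile_sq_le l x y)

theorem integral_psiProfile_sq_le {l : ℝ} (hl : 0 < l) (x : ℝ) :
    ∫ y, psiProfile l x y ^ 2 ≤ 4 / l := by
  have h2l : 0 < 2 * l := by positivity
  calc ∫ y, psiProfile l x y ^ 2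
      ≤ ∫ y, (2 * exp (-(2 * l) * |y + x|) + 2 * exp (-(2 * l) * |y - x|)) :=
        integral_mono_of_nonneg (ae_of_all _ fun y => sq_nonneg _) (integrable_exp_tails h2l x)
          (ae_of_all _ (psiProfile_sq_le l x))
    _ = 4 / l := by
        rw [integral_add (((integrable_exp_neg_mul_abs h2l).comp_add_right x).const_mul 2)
            (((integrable_exp_neg_mul_abs h2l).comp_sub_right x).const_mul 2),
          integral_const_mul, integral_const_mul,
          integral_add_right_eq_self (fun y => exp (-(2 * l) * |y|)),
          integral_sub_right_eq_self (fun y => exp (-(2 * l) * |y|)),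
          integral_exp_neg_mul_abs h2l]
        field_simp
        ring

theorem inv_two_mul_le_integral_psiProfile_sq {l x : ℝ} (hl : 0 < l) (hx : 0 < x) :
    1 / (2 * l) ≤ ∫ y, psiProfile l x y ^ 2 := by
  have h2l : 0 < 2 * l := by positivity
  have hright : EqOn (fun y => psiProfile l x y ^ 2)
      (fun y => exp (2 * l * x) * exp (-(2 * l) * y)) (Ioi x) := fun y hy => by
    have hy : x < y := hy
    simp only [psiProfile, if_neg (by linarith : ¬y ≤ -x), if_neg (not_lt.2 hy.le)]
    rw [← exp_add, ← exp_nat_mul]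
    congr 1
    push_cast
    ring
  calc 1 / (2 * l) = ∫ y in Ioi x, exp (2 * l * x) * exp (-(2 * l) * y) := by
        rw [integral_const_mul, integral_exp_mul_Ioi (neg_neg_of_pos h2l), neg_div_neg_eq,
          ← mul_div_assoc, ← exp_add, neg_mul, add_neg_cancel, exp_zero]
    _ = ∫ y in Ioi x, psiProfile l x y ^ 2 := (setIntegral_congr_fun measurableSet_Ioi hright).symm
    _ ≤ ∫ y, psiProfile l x y ^ 2 :=
        setIntegral_le_integral (integrable_psiProfile_sq hl x) (ae_of_all _ fun y => sq_nonneg _)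

theorem stmt_9 (lam1 : ℝ → ℝ)
    (hlam1 : ∀ x : ℝ, 0 ≤ x → lam1 x ∈ Set.Ioc (1/2 : ℝ) 1 ∧
      (2 * lam1 x - 1) * Real.exp (2 * lam1 x * x) = 1)
    (ψ : ℝ → ℝ → ℝ)
    (hψ1 : ∀ x : ℝ, 0 < x → ∀ y : ℝ, y ≤ -x → ψ x y = Real.exp (lam1 x * (x + y)))
    (hψ2 : ∀ x : ℝ, 0 < x → ∀ y : ℝ, -x < y → y < x →
      ψ x y = Real.cosh (lam1 x * y) / Real.cosh (lam1 x * x))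
    (hψ3 : ∀ x : ℝ, 0 < x → ∀ y : ℝ, x ≤ y → ψ x y = Real.exp (lam1 x * (x - y))) :
    (∀ x : ℝ, 0 < x → ∀ y : ℝ,
      ((if y ≤ -x then Real.exp (lam1 x * (x + y)) else 0)
        + (if x ≤ y then Real.exp (lam1 x * (x - y)) else 0) ≤ ψ x y) ∧
      ψ x y ≤ Real.exp (-(lam1 x) * |x + y|) + Real.exp (-(lam1 x) * |y - x|)) ∧
    (∃ c C : ℝ, 0 < c ∧ c ≤ C ∧ ∀ x : ℝ, 0 < x →
      c ≤ Real.sqrt (∫ y : ℝ, (ψ x y) ^ 2) ∧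
      Real.sqrt (∫ y : ℝ, (ψ x y) ^ 2) ≤ C) := by
  have hψ : ∀ x, 0 < x → ψ x = psiProfile (lam1 x) x := fun x hx => funext fun y => by
    unfold psiProfile
    split_ifs with h₁ h₂
    · exact hψ1 x hx y h₁
    · exact hψ2 x hx y (not_le.1 h₁) h₂
    · exact hψ3 x hx y (not_lt.1 h₂)
  refine ⟨fun x hx y => ?_, 1 / 2, 3, by norm_num, by norm_num, fun x hx => ?_⟩
  · rw [hψ x hx]
    exact ⟨ite_add_ite_le_psiProfile hx _ _, psiProfile_le _ _ _⟩
  obtain ⟨⟨hl₁, hl₂⟩, -⟩ := hlam1 x hx.le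
  have hl : 0 < lam1 x := by linarith
  have hlow : 1 / 2 ≤ 1 / (2 * lam1 x) := by
    rw [div_le_div_iff₀ (by norm_num) (by positivity)]; linarith
  have hup : 4 / lam1 x ≤ 9 := by
    rw [div_le_iff₀ hl]; linarith
  rw [hψ x hx, le_sqrt' (by norm_num), sqrt_le_left (by norm_num)]
  constructor
  · linarith [inv_two_mul_le_integral_psiProfile_sq hl hx]
  · linarith [integral_psiProfile_sq_le hl x]
end

section
/- For every x > 0 one has the identity ∫_ℝ |∂_y ψ_{x,1}(y)|² dy = μ₁(x) ∫_ℝ |ψ_{x,1}(y)|² dy + 2, and consequently sup_{x>0} (∫_ℝ |∂_y ψ_{x,1}(y)|² dy) / (∫_ℝ |ψ_{x,1}(y)|² dy) < ∞, i.e. x ↦ ‖∂_y u_x‖²_{L²(ℝ)} is a bounded function of x, where u_x = ψ_{x,1}/‖ψ_{x,1}‖_{L²(ℝ)}. -/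
open Real MeasureTheory Set Filter

/-! `ψ x` is even, so both integrals are twice the corresponding integrals over `(0, ∞)`.
On `(0, x)` and on `(x, ∞)` one has `ψ'' = λ² ψ`, so `ψ'² + λ² ψ² = (ψ ψ')'`, and the two pieces
contribute `λ tanh (λ x)` and `λ`; the equation defining `λ` is exactly `λ tanh (λ x) = 1 - λ`.
The tail alone gives `∫ ψ² ≥ 1 / λ ≥ 1`, which bounds the quotient by `2`. -/

theorem Function.Even.deriv_neg {f : ℝ → ℝ} (hf : Function.Even f) (y : ℝ) :
    deriv f (-y) = -deriv f y := by
  rw [← funext hf, deriv_comp_neg, neg_neg, funext hf]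

theorem integral_eq_two_mul_integral_Ioi_of_even {g : ℝ → ℝ} (hg : Function.Even g) :
    ∫ y, g y = 2 * ∫ y in Ioi 0, g y := by
  rw [← integral_comp_abs]
  congr 1 with y
  rcases abs_choice y with h | h <;> rw [h]
  exact (hg y).symm

theorem integrableOn_Ioc_of_eqOn_Ioo {g G : ℝ → ℝ} {a b : ℝ} (hG : Continuous G)
    (hgG : EqOn g G (Ioo a b)) : IntegrableOn g (Ioc a b) := by
  rw [integrableOn_Ioc_iff_integrableOn_Ioo]
  exact (hG.integrableOn_Icc.mono_set Ioo_subset_Icc_self).congr_fun hgG.symm measurableSet_Ioo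

theorem mul_tanh_eq_of_mul_exp_eq {l x : ℝ} (h : (2 * l - 1) * exp (2 * l * x) = 1) :
    l * tanh (l * x) = 1 - l := by
  have hexp : exp (2 * l * x) = exp (l * x) ^ 2 := by rw [← exp_nat_mul]; ring_nf
  have hpos := exp_pos (l * x)
  rw [tanh_eq_sinh_div_cosh, sinh_eq, cosh_eq, exp_neg]
  field_simp
  nlinarith [hexp ▸ h]

section

variable {f : ℝ → ℝ} {l x : ℝ}

theorem deriv_eq_of_eqOn_cosh (hmid : EqOn f (fun y => cosh (l * y) / cosh (l * x)) (Ioo 0 x))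
    {y : ℝ} (hy : y ∈ Ioo 0 x) : deriv f y = l * sinh (l * y) / cosh (l * x) := by
  rw [hmid.deriv isOpen_Ioo hy]
  exact (((hasDerivAt_id y).const_mul l).cosh.div_const _).deriv.trans (by simp only [id]; ring)

theorem deriv_eq_of_eqOn_exp (htail : EqOn f (fun y => exp (l * (x - y))) (Ioi x))
    {y : ℝ} (hy : y ∈ Ioi x) : deriv f y = -l * f y := by
  rw [htail.deriv isOpen_Ioi hy, htail hy]
  exact (((hasDerivAt_id y).const_sub x).const_mul l).exp.deriv.trans (by simp only [id]; ring)

theorem sq_eqOn_of_eqOn_exp (htail : EqOn f (fun y => exp (l * (x - y))) (Ioi x)) :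
    EqOn (fun y => f y ^ 2) (fun y => exp (2 * l * x) * exp (-(2 * l) * y)) (Ioi x) := by
  intro y hy
  simp only [htail hy, ← exp_nat_mul, ← exp_add]
  ring_nf

theorem integrableOn_sq_of_eqOn_exp (hl : 0 < l)
    (htail : EqOn f (fun y => exp (l * (x - y))) (Ioi x)) :
    IntegrableOn (fun y => f y ^ 2) (Ioi x) :=
  IntegrableOn.congr_fun ((integrableOn_exp_mul_Ioi (by linarith) x).const_mul _)
    (sq_eqOn_of_eqOn_exp htail).symm measurableSet_Ioi

theorem integral_sq_of_eqOn_exp (hl : 0 < l)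
    (htail : EqOn f (fun y => exp (l * (x - y))) (Ioi x)) :
    ∫ y in Ioi x, f y ^ 2 = 1 / (2 * l) := by
  rw [setIntegral_congr_fun measurableSet_Ioi (sq_eqOn_of_eqOn_exp htail), integral_const_mul,
    integral_exp_mul_Ioi (by linarith), mul_div_assoc', mul_neg, ← exp_add]
  field_simp
  simp

theorem integrableOn_sq_Ioi_zero (hl : 0 < l) (hx : 0 ≤ x)
    (hmid : EqOn f (fun y => cosh (l * y) / cosh (l * x)) (Ioo 0 x))
    (htail : EqOn f (fun y => exp (l * (x - y))) (Ioi x)) :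
    IntegrableOn (fun y => f y ^ 2) (Ioi 0) := by
  have hIoc : IntegrableOn (fun y => f y ^ 2) (Ioc 0 x) :=
    integrableOn_Ioc_of_eqOn_Ioo (G := fun y => (cosh (l * y) / cosh (l * x)) ^ 2)
      (by fun_prop) fun y hy => by simp only [hmid hy]
  rw [← Ioc_union_Ioi_eq_Ioi hx]
  exact hIoc.union (integrableOn_sq_of_eqOn_exp hl htail)

theorem integrableOn_deriv_sq_Ioi_zero (hl : 0 < l) (hx : 0 ≤ x)
    (hmid : EqOn f (fun y => cosh (l * y) / cosh (l * x)) (Ioo 0 x))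
    (htail : EqOn f (fun y => exp (l * (x - y))) (Ioi x)) :
    IntegrableOn (fun y => deriv f y ^ 2) (Ioi 0) := by
  have hIoc : IntegrableOn (fun y => deriv f y ^ 2) (Ioc 0 x) :=
    integrableOn_Ioc_of_eqOn_Ioo (G := fun y => (l * sinh (l * y) / cosh (l * x)) ^ 2)
      (by fun_prop) fun y hy => by simp only [deriv_eq_of_eqOn_cosh hmid hy]
  have hIoi : IntegrableOn (fun y => deriv f y ^ 2) (Ioi x) :=
    IntegrableOn.congr_fun ((integrableOn_sq_of_eqOn_exp hl htail).const_mul (l ^ 2))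
      (fun y hy => by simp only [deriv_eq_of_eqOn_exp htail hy]; ring) measurableSet_Ioi
  rw [← Ioc_union_Ioi_eq_Ioi hx]
  exact hIoc.union hIoi

theorem integral_energy_of_eqOn_cosh (hx : 0 ≤ x)
    (hmid : EqOn f (fun y => cosh (l * y) / cosh (l * x)) (Ioo 0 x)) :
    ∫ y in Ioc 0 x, deriv f y ^ 2 + l ^ 2 * f y ^ 2 = l * tanh (l * x) := by
  set E := fun y => l ^ 2 * (sinh (l * y) ^ 2 + cosh (l * y) ^ 2) / cosh (l * x) ^ 2
  have hE : EqOn (fun y => deriv f y ^ 2 + l ^ 2 * f y ^ 2) E (Ioo 0 x) := fun y hy => by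
    simp only [deriv_eq_of_eqOn_cosh hmid hy, hmid hy, E]
    ring
  -- `f * deriv f` is an antiderivative of the energy density because `f'' = l ^ 2 * f`
  have hF : ∀ y, HasDerivAt (fun y => l * sinh (l * y) * cosh (l * y) / cosh (l * x) ^ 2)
      (E y) y := fun y => by
    have hly := (hasDerivAt_id' y).const_mul l
    exact (((hly.sinh.const_mul l).mul hly.cosh).div_const (cosh (l * x) ^ 2)).congr_deriv
      (by simp only [E]; ring)
  rw [← intervalIntegral.integral_of_le hx,
    intervalIntegral.integral_eq_sub_of_hasDerivAt_of_le hx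
      (fun y _ => (hF y).continuousAt.continuousWithinAt) (fun y hy => ?_)
      ((intervalIntegrable_iff_integrableOn_Ioc_of_le hx).2
        (integrableOn_Ioc_of_eqOn_Ioo (by fun_prop) hE))]
  · simp only [mul_zero, sinh_zero, zero_mul, zero_div, sub_zero, tanh_eq_sinh_div_cosh]
    field_simp
  · exact (hF y).congr_deriv (hE hy).symm

theorem integral_energy_of_eqOn_exp (hl : 0 < l)
    (htail : EqOn f (fun y => exp (l * (x - y))) (Ioi x)) :
    ∫ y in Ioi x, deriv f y ^ 2 + l ^ 2 * f y ^ 2 = l := by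
  rw [setIntegral_congr_fun measurableSet_Ioi (g := fun y => 2 * l ^ 2 * f y ^ 2)
      fun y hy => by simp only [deriv_eq_of_eqOn_exp htail hy]; ring,
    integral_const_mul, integral_sq_of_eqOn_exp hl htail]
  field_simp

theorem integral_deriv_sq_Ioi_zero (hl : 0 < l) (hx : 0 ≤ x)
    (hmid : EqOn f (fun y => cosh (l * y) / cosh (l * x)) (Ioo 0 x))
    (htail : EqOn f (fun y => exp (l * (x - y))) (Ioi x)) :
    ∫ y in Ioi 0, deriv f y ^ 2 = -l ^ 2 * (∫ y in Ioi 0, f y ^ 2) + l * (tanh (l * x) + 1) := by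
  have hsq := (integrableOn_sq_Ioi_zero hl hx hmid htail).const_mul (l ^ 2)
  have hderiv := integrableOn_deriv_sq_Ioi_zero hl hx hmid htail
  have henergy : IntegrableOn (fun y => deriv f y ^ 2 + l ^ 2 * f y ^ 2) (Ioi 0) :=
    hderiv.add hsq
  have hsplit := setIntegral_union Ioc_disjoint_Ioi_same measurableSet_Ioi
    (henergy.mono_set Ioc_subset_Ioi_self) (henergy.mono_set (Ioi_subset_Ioi hx))
  rw [Ioc_union_Ioi_eq_Ioi hx, integral_add hderiv hsq, integral_const_mul,
    integral_energy_of_eqOn_cosh hx hmid, integral_energy_of_eqOn_exp hl htail] at hsplit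
  linarith

theorem one_div_two_mul_le_integral_sq_Ioi_zero (hl : 0 < l) (hx : 0 ≤ x)
    (hmid : EqOn f (fun y => cosh (l * y) / cosh (l * x)) (Ioo 0 x))
    (htail : EqOn f (fun y => exp (l * (x - y))) (Ioi x)) :
    1 / (2 * l) ≤ ∫ y in Ioi 0, f y ^ 2 :=
  integral_sq_of_eqOn_exp hl htail ▸
    setIntegral_mono_set (integrableOn_sq_Ioi_zero hl hx hmid htail)
    (Eventually.of_forall fun y => sq_nonneg (f y)) (Ioi_subset_Ioi hx).eventuallyLE

theorem even_of_eqOn_exp_cosh_exp (hleft : EqOn f (fun y => exp (l * (x + y))) (Iic (-x)))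
    (hmid : EqOn f (fun y => cosh (l * y) / cosh (l * x)) (Ioo (-x) x))
    (hright : EqOn f (fun y => exp (l * (x - y))) (Ici x)) : Function.Even f := by
  intro y
  rcases le_or_gt y (-x) with hy | hy
  · simp only [hright (show x ≤ -y by linarith), hleft hy, sub_neg_eq_add]
  rcases lt_or_ge y x with hy' | hy'
  · have hy_neg : -y ∈ Ioo (-x) x := ⟨by linarith, by linarith⟩
    simp only [hmid hy_neg, hmid ⟨hy, hy'⟩, mul_neg, cosh_neg]
  · simp only [hleft (show -y ≤ -x by linarith), hright hy', sub_eq_add_neg]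

theorem integral_deriv_sq_of_even (hl : 0 < l) (hx : 0 ≤ x) (heven : Function.Even f)
    (hmid : EqOn f (fun y => cosh (l * y) / cosh (l * x)) (Ioo 0 x))
    (htail : EqOn f (fun y => exp (l * (x - y))) (Ioi x)) :
    ∫ y, deriv f y ^ 2 = -l ^ 2 * (∫ y, f y ^ 2) + 2 * (l * tanh (l * x) + l) := by
  rw [integral_eq_two_mul_integral_Ioi_of_even fun y => by simp only [heven.deriv_neg, neg_sq],
    integral_eq_two_mul_integral_Ioi_of_even fun y => by simp only [heven y],
    integral_deriv_sq_Ioi_zero hl hx hmid htail]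
  ring

theorem one_div_le_integral_sq_of_even (hl : 0 < l) (hx : 0 ≤ x) (heven : Function.Even f)
    (hmid : EqOn f (fun y => cosh (l * y) / cosh (l * x)) (Ioo 0 x))
    (htail : EqOn f (fun y => exp (l * (x - y))) (Ioi x)) :
    1 / l ≤ ∫ y, f y ^ 2 := by
  rw [integral_eq_two_mul_integral_Ioi_of_even fun y => by simp only [heven y]]
  have h := one_div_two_mul_le_integral_sq_Ioi_zero hl hx hmid htail
  have h2 : 1 / l = 2 * (1 / (2 * l)) := by field_simp
  linarith

end

theorem stmt_11 (lam1 : ℝ → ℝ)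
    (hlam1 : ∀ x : ℝ, 0 ≤ x → lam1 x ∈ Set.Ioc (1/2 : ℝ) 1 ∧
      (2 * lam1 x - 1) * Real.exp (2 * lam1 x * x) = 1)
    (ψ : ℝ → ℝ → ℝ)
    (hψ1 : ∀ x : ℝ, 0 < x → ∀ y : ℝ, y ≤ -x → ψ x y = Real.exp (lam1 x * (x + y)))
    (hψ2 : ∀ x : ℝ, 0 < x → ∀ y : ℝ, -x < y → y < x →
      ψ x y = Real.cosh (lam1 x * y) / Real.cosh (lam1 x * x))
    (hψ3 : ∀ x : ℝ, 0 < x → ∀ y : ℝ, x ≤ y → ψ x y = Real.exp (lam1 x * (x - y))) :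
    (∀ x : ℝ, 0 < x →
      (∫ y : ℝ, (deriv (ψ x) y) ^ 2)
        = (-(lam1 x) ^ 2) * (∫ y : ℝ, (ψ x y) ^ 2) + 2) ∧
    (∃ M : ℝ, ∀ x : ℝ, 0 < x →
      (∫ y : ℝ, (deriv (ψ x) y) ^ 2) / (∫ y : ℝ, (ψ x y) ^ 2) ≤ M) := by
  have key : ∀ x : ℝ, 0 < x →
      (∫ y, deriv (ψ x) y ^ 2) = -lam1 x ^ 2 * (∫ y, ψ x y ^ 2) + 2 ∧ 1 ≤ ∫ y, ψ x y ^ 2 := by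
    intro x hx
    obtain ⟨⟨hl_gt, hl_le⟩, hlam⟩ := hlam1 x hx.le
    have hl : 0 < lam1 x := by linarith
    have hmid : EqOn (ψ x) _ (Ioo 0 x) := fun y hy => hψ2 x hx y (by linarith [hy.1]) hy.2
    have htail : EqOn (ψ x) _ (Ioi x) := fun y hy => hψ3 x hx y (le_of_lt hy)
    have heven := even_of_eqOn_exp_cosh_exp (hψ1 x hx) (fun y hy => hψ2 x hx y hy.1 hy.2) (hψ3 x hx)
    refine ⟨?_, ?_⟩
    · rw [integral_deriv_sq_of_even hl hx.le heven hmid htail, mul_tanh_eq_of_mul_exp_eq hlam]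
      ring
    · have hone : 1 ≤ 1 / lam1 x := by rw [le_div_iff₀ hl]; linarith
      exact hone.trans (one_div_le_integral_sq_of_even hl hx.le heven hmid htail)
  refine ⟨fun x hx => (key x hx).1, 2, fun x hx => ?_⟩
  obtain ⟨hid, hone⟩ := key x hx
  rw [hid, div_le_iff₀ (by linarith)]
  nlinarith [mul_nonneg (sq_nonneg (lam1 x)) (zero_le_one.trans hone)]
end
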